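/- arXiv:2103.03661 — 10 statements merged into one kernel-verified Lean document; each statement's English description precedes it below -/
import Mathlib

section
/- (Hölder inequality for sublinear monotone operators) Let X be a compact metric space and T : C(X) → C(X) a unital, sublinear and monotone operator. Then for all f, g ∈ C(X) and p ∈ (1,∞) with 1/p + 1/q = 1, one has T(|fg|) ≤ [T(|f|^p)]^{1/p} · [T(|g|^q)]^{1/q} pointwise. -/
/-!
Young's inequality `st ≤ s^p/p + t^q/q`, applied to `|f|/a` and `|g|/b`, bounds `|fg|` by a
positive combination of `|f|^p` and `|g|^q`; a sublinear monotone `T` preserves such bounds.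
Evaluating at `x` and choosing `a^p = T(|f|^p)(x) + δ`, `b^q = T(|g|^q)(x) + δ` gives
`T(|fg|)(x) ≤ ab`, and `δ → 0` finishes the proof.
-/

open Filter Topology

namespace Real

theorem mul_le_young_scaled {p q a b x y : ℝ} (hpq : p.HolderConjugate q)
    (ha : 0 < a) (hb : 0 < b) (hx : 0 ≤ x) (hy : 0 ≤ y) :
    x * y ≤ a * b / (p * a ^ p) * x ^ p + a * b / (q * b ^ q) * y ^ q := by
  have hyoung := young_inequality_of_nonneg (div_nonneg hx ha.le) (div_nonneg hy hb.le) hpq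
  rw [div_rpow hx ha.le, div_rpow hy hb.le] at hyoung
  have hap : 0 < a ^ p := rpow_pos_of_pos ha p
  have hbq : 0 < b ^ q := rpow_pos_of_pos hb q
  calc x * y = a * b * (x / a * (y / b)) := by field_simp
    _ ≤ a * b * (x ^ p / a ^ p / p + y ^ q / b ^ q / q) := by gcongr
    _ = a * b / (p * a ^ p) * x ^ p + a * b / (q * b ^ q) * y ^ q := by
      field_simp [hpq.ne_zero, hpq.symm.ne_zero]

theorem le_rpow_mul_rpow_of_forall_pos {r s A B C : ℝ} (hr : 0 ≤ r) (hs : 0 ≤ s)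
    (h : ∀ δ > 0, C ≤ (A + δ) ^ r * (B + δ) ^ s) :
    C ≤ A ^ r * B ^ s := by
  have hcont : ContinuousAt (fun δ : ℝ => (A + δ) ^ r * (B + δ) ^ s) 0 := by
    have hAr := (continuousAt_rpow_const (A + 0) r (.inr hr)).comp
      (continuous_const_add A).continuousAt
    have hBs := (continuousAt_rpow_const (B + 0) s (.inr hs)).comp
      (continuous_const_add B).continuousAt
    exact hAr.mul hBs
  have hlim :
      Tendsto (fun δ : ℝ => (A + δ) ^ r * (B + δ) ^ s) (𝓝[>] 0) (𝓝 (A ^ r * B ^ s)) := by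
    simpa using hcont.tendsto.mono_left nhdsWithin_le_nhds
  exact ge_of_tendsto hlim (eventually_nhdsWithin_of_forall h)

theorem le_rpow_mul_rpow_of_forall_young {p q A B C : ℝ} (hpq : p.HolderConjugate q)
    (hA : 0 ≤ A) (hB : 0 ≤ B)
    (h : ∀ a b : ℝ, 0 < a → 0 < b →
      C ≤ a * b / (p * a ^ p) * A + a * b / (q * b ^ q) * B) :
    C ≤ A ^ (1 / p) * B ^ (1 / q) := by
  refine le_rpow_mul_rpow_of_forall_pos (by simp [hpq.nonneg]) (by simp [hpq.symm.nonneg])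
    fun δ hδ => ?_
  set a := (A + δ) ^ (1 / p)
  set b := (B + δ) ^ (1 / q)
  have hAδ : 0 < A + δ := by positivity
  have hBδ : 0 < B + δ := by positivity
  have hap : a ^ p = A + δ := by simpa [a] using rpow_inv_rpow hAδ.le hpq.ne_zero
  have hbq : b ^ q = B + δ := by simpa [b] using rpow_inv_rpow hBδ.le hpq.symm.ne_zero
  have hA_le : A / (A + δ) ≤ 1 := (div_le_one hAδ).2 (by linarith)
  have hB_le : B / (B + δ) ≤ 1 := (div_le_one hBδ).2 (by linarith)
  calc C ≤ a * b / (p * a ^ p) * A + a * b / (q * b ^ q) * B :=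
        h a b (by positivity) (by positivity)
    _ = a * b * (1 / p * (A / (A + δ)) + 1 / q * (B / (B + δ))) := by
      rw [hap, hbq]; field_simp
    _ ≤ a * b * (1 / p * 1 + 1 / q * 1) := by
      have := hpq.pos
      have := hpq.symm.pos
      gcongr
    _ = a * b := by rw [mul_one, mul_one, hpq.one_div_add_one_div, div_one, mul_one]

end Real

namespace ContinuousMap

variable {X : Type*} [TopologicalSpace X]

theorem apply_nonneg_of_monotone {T : C(X, ℝ) → C(X, ℝ)}
    (hhom : ∀ (a : ℝ) (f : C(X, ℝ)), 0 ≤ a → T (a • f) = a • T f)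
    (hmono : ∀ f g : C(X, ℝ), f ≤ g → T f ≤ T g) {f : C(X, ℝ)} (hf : 0 ≤ f) :
    0 ≤ T f := by
  have hT0 : T 0 = 0 := by simpa using hhom 0 0 le_rfl
  exact hT0 ▸ hmono 0 f hf

theorem apply_le_smul_add_smul_of_sublinear {T : C(X, ℝ) → C(X, ℝ)}
    (hsub : ∀ f g : C(X, ℝ), T (f + g) ≤ T f + T g)
    (hhom : ∀ (a : ℝ) (f : C(X, ℝ)), 0 ≤ a → T (a • f) = a • T f)
    (hmono : ∀ f g : C(X, ℝ), f ≤ g → T f ≤ T g) {a b : ℝ} (ha : 0 ≤ a) (hb : 0 ≤ b)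
    {f g h : C(X, ℝ)} (hfgh : f ≤ a • g + b • h) : T f ≤ a • T g + b • T h :=
  calc T f ≤ T (a • g + b • h) := hmono _ _ hfgh
    _ ≤ T (a • g) + T (b • h) := hsub _ _
    _ = a • T g + b • T h := by rw [hhom a g ha, hhom b h hb]

end ContinuousMap

theorem stmt3_general {X : Type*} [MetricSpace X]
    (T : C(X, ℝ) → C(X, ℝ))
    (hsub : ∀ f g : C(X, ℝ), T (f + g) ≤ T f + T g)
    (hhom : ∀ (a : ℝ) (f : C(X, ℝ)), 0 ≤ a → T (a • f) = a • T f)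
    (hmono : ∀ f g : C(X, ℝ), f ≤ g → T f ≤ T g)
    (p q : ℝ) (hp : 1 < p) (hpq : 1 / p + 1 / q = 1)
    (f g fg fp gq : C(X, ℝ))
    (hfg : ∀ x, fg x = |f x * g x|)
    (hfp : ∀ x, fp x = |f x| ^ p)
    (hgq : ∀ x, gq x = |g x| ^ q) :
    ∀ x, T fg x ≤ (T fp x) ^ (1 / p) * (T gq x) ^ (1 / q) := by
  intro x
  have hconj : p.HolderConjugate q :=
    Real.holderConjugate_iff.mpr ⟨hp, by simpa only [one_div] using hpq⟩
  have hp0 := hconj.pos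
  have hq0 := hconj.symm.pos
  have hfp0 : 0 ≤ fp := ContinuousMap.le_def.2 fun y => by
    rw [hfp y, ContinuousMap.zero_apply]; positivity
  have hgq0 : 0 ≤ gq := ContinuousMap.le_def.2 fun y => by
    rw [hgq y, ContinuousMap.zero_apply]; positivity
  refine Real.le_rpow_mul_rpow_of_forall_young hconj
    (ContinuousMap.apply_nonneg_of_monotone hhom hmono hfp0 x)
    (ContinuousMap.apply_nonneg_of_monotone hhom hmono hgq0 x) fun a b ha hb => ?_
  have hyoung : fg ≤ (a * b / (p * a ^ p)) • fp + (a * b / (q * b ^ q)) • gq := fun y => by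
    simpa [hfg, hfp, hgq, abs_mul] using
      Real.mul_le_young_scaled hconj ha hb (abs_nonneg (f y)) (abs_nonneg (g y))
  simpa using ContinuousMap.apply_le_smul_add_smul_of_sublinear hsub hhom hmono
    (by positivity) (by positivity) hyoung x

/-- Hölder's inequality for unital, sublinear and monotone operators on `C(X)`,
`X` a compact metric space: `T(|fg|) ≤ (T(|f|^p))^{1/p} · (T(|g|^q))^{1/q}` pointwise. -/
theorem stmt3 {X : Type*} [MetricSpace X] [CompactSpace X]
    (T : C(X, ℝ) → C(X, ℝ))
    (hunit : T 1 = 1)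
    (hsub : ∀ f g : C(X, ℝ), T (f + g) ≤ T f + T g)
    (hhom : ∀ (a : ℝ) (f : C(X, ℝ)), 0 ≤ a → T (a • f) = a • T f)
    (hmono : ∀ f g : C(X, ℝ), f ≤ g → T f ≤ T g)
    (p q : ℝ) (hp : 1 < p) (hpq : 1 / p + 1 / q = 1)
    (f g fg fp gq : C(X, ℝ))
    (hfg : ∀ x, fg x = |f x * g x|)
    (hfp : ∀ x, fp x = |f x| ^ p)
    (hgq : ∀ x, gq x = |g x| ^ q) :
    ∀ x, T fg x ≤ (T fp x) ^ (1 / p) * (T gq x) ^ (1 / q) :=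
  stmt3_general T hsub hhom hmono p q hp hpq f g fg fp gq hfg hfp hgq
end

section
/- Let (X,d) be a compact metric space and γ : X × X → ℝ a separating function (continuous, nonnegative, vanishing only on the diagonal). Then for every ε > 0 there exists δ(ε) > 0 such that d(x,y) ≤ ε + δ(ε)·γ(x,y) for all x, y ∈ X. -/
/-- On a compact metric space, every separating function `γ` dominates the metric
in the sense that for each `ε > 0` there is `δ(ε) > 0` with
`d(x,y) ≤ ε + δ(ε) γ(x,y)` for all `x, y`. -/
theorem stmt8 {X : Type*} [MetricSpace X] [CompactSpace X]
    (γ : X × X → ℝ) (hγc : Continuous γ) (hγ0 : ∀ p, 0 ≤ γ p)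
    (hγsep : ∀ x y, γ (x, y) = 0 → x = y) :
    ∀ ε > (0 : ℝ), ∃ δ > (0 : ℝ), ∀ x y : X, dist x y ≤ ε + δ * γ (x, y) := by
  intro ε hε
  set K : Set (X × X) := {p | ε ≤ dist p.1 p.2} with hK
  have hKclosed : IsClosed K :=
    isClosed_le continuous_const (continuous_fst.dist continuous_snd)
  have hKcomp : IsCompact K := hKclosed.isCompact
  rcases K.eq_empty_or_nonempty with hKe | hKne
  · refine ⟨1, one_pos, fun x y => ?_⟩
    have : ¬ ε ≤ dist x y := fun h => by
      have : (x, y) ∈ K := h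
      simp [hKe] at this
    have := le_of_not_ge this
    nlinarith [hγ0 (x, y), dist_nonneg (x := x) (y := y)]
  · obtain ⟨p, hpK, hpmin⟩ := hKcomp.exists_isMinOn hKne (hγc.continuousOn)
    have hm : 0 < γ p := by
      rcases lt_or_eq_of_le (hγ0 p) with h | h
      · exact h
      · exfalso
        have : p.1 = p.2 := hγsep p.1 p.2 (by rw [← h])
        have hd : dist p.1 p.2 = 0 := by simp [this]
        have : ε ≤ (0:ℝ) := hd ▸ hpK
        linarith
    set m := γ p with hm'
    set D := Metric.diam (Set.univ : Set X) with hD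
    have hDnn : 0 ≤ D := Metric.diam_nonneg
    refine ⟨D / m + 1, by positivity, fun x y => ?_⟩
    by_cases hxy : ε ≤ dist x y
    · have hmem : (x, y) ∈ K := hxy
      have hγge : m ≤ γ (x, y) := hpmin hmem
      have hdle : dist x y ≤ D :=
        Metric.dist_le_diam_of_mem (isCompact_univ.isBounded) trivial trivial
      have h1 : D ≤ (D / m) * γ (x, y) := by
        rw [div_mul_eq_mul_div, le_div_iff₀ hm]
        nlinarith
      nlinarith [hγ0 (x, y)]
    · push_neg at hxy
      nlinarith [hγ0 (x, y), div_nonneg hDnn hm.le]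
end

section
/- (Nonlinear Korovkin theorem for compact metric spaces, nonnegative case) Let X be a compact metric space, γ a separating function on X, and (T_n) a sequence of sublinear and monotone operators from C(X) to C(X) such that T_n(1) → 1 uniformly on X and T_n(γ_x)(x) → 0 uniformly in x ∈ X, where γ_x(y) = γ(x,y). Then T_n(f) → f uniformly on X for every nonnegative f ∈ C(X). -/
/-!
For every `ε > 0` there is `C` with `|f y - f x| ≤ ε + C γ(x, y)`: near the diagonal by uniform
continuity of `f`, away from it because, by compactness, `γ` is bounded below there by a positive
constant. Hence `f ≤ (f x + ε) • 1 + C • γ_x` and `f x • 1 ≤ f + ε • 1 + C • γ_x`; applying the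
sublinear monotone `T_n` and evaluating at `x` gives
`|T_n f x - f x| ≤ f x |T_n 1 x - 1| + ε T_n 1 x + C T_n(γ_x)(x)`,
whose right-hand side tends to `ε` uniformly in `x`.
-/

open Filter

theorem exists_pos_forall_dist_lt_of_pos_of_ne {X : Type*} [MetricSpace X] [CompactSpace X]
    {γ : X × X → ℝ} (hγc : Continuous γ) (hγpos : ∀ x y, x ≠ y → 0 < γ (x, y))
    {η : ℝ} (hη : 0 < η) :
    ∃ δ > 0, ∀ x y, γ (x, y) < δ → dist x y < η := by
  set K : Set (X × X) := {p | η ≤ dist p.1 p.2}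
  have hK : IsCompact K := (isClosed_le continuous_const continuous_dist).isCompact
  have hγK : ∀ p ∈ K, 0 < γ p := fun p hp =>
    hγpos p.1 p.2 fun h => by
      have hp : η ≤ dist p.1 p.2 := hp
      rw [h, dist_self] at hp
      linarith
  obtain ⟨δ, hδ, hδK⟩ := hK.exists_forall_le' hγc.continuousOn hγK
  exact ⟨δ, hδ, fun x y hxy => not_le.mp fun h => (hδK (x, y) h).not_gt hxy⟩

theorem exists_abs_sub_le_add_mul {X : Type*} [MetricSpace X] [CompactSpace X]
    {γ : X × X → ℝ} (hγc : Continuous γ) (hγ0 : ∀ p, 0 ≤ γ p)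
    (hγsep : ∀ x y, γ (x, y) = 0 → x = y) (f : C(X, ℝ)) {ε : ℝ} (hε : 0 < ε) :
    ∃ C ≥ 0, ∀ x y, |f y - f x| ≤ ε + C * γ (x, y) := by
  obtain ⟨η, hη, hfη⟩ :=
    Metric.uniformContinuous_iff.mp (CompactSpace.uniformContinuous_of_continuous f.continuous)
      ε hε
  have hγpos : ∀ x y, x ≠ y → 0 < γ (x, y) := fun x y hxy =>
    (hγ0 _).lt_of_ne' (mt (hγsep x y) hxy)
  obtain ⟨δ, hδ, hδη⟩ := exists_pos_forall_dist_lt_of_pos_of_ne hγc hγpos hη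
  refine ⟨2 * ‖f‖ / δ, by positivity, fun x y => ?_⟩
  have hCγ : 0 ≤ 2 * ‖f‖ / δ * γ (x, y) := mul_nonneg (by positivity) (hγ0 _)
  rcases lt_or_ge (γ (x, y)) δ with hnear | hfar
  · have : |f y - f x| < ε := by
      rw [← Real.dist_eq, dist_comm]; exact hfη (hδη x y hnear)
    linarith
  · calc |f y - f x| ≤ 2 * ‖f‖ := by rw [← Real.dist_eq]; exact f.dist_le_two_norm y x
      _ = 2 * ‖f‖ / δ * δ := by field_simp
      _ ≤ 2 * ‖f‖ / δ * γ (x, y) := by gcongr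
      _ ≤ ε + 2 * ‖f‖ / δ * γ (x, y) := by linarith

section SublinearMonotone

variable {X : Type*} [TopologicalSpace X] {T : C(X, ℝ) → C(X, ℝ)}

theorem apply_smul_add_smul_le (hsub : ∀ f g, T (f + g) ≤ T f + T g)
    (hhom : ∀ (a : ℝ) f, 0 ≤ a → T (a • f) = a • T f)
    {a b : ℝ} (ha : 0 ≤ a) (hb : 0 ≤ b) (f g : C(X, ℝ)) :
    T (a • f + b • g) ≤ a • T f + b • T g := by
  simpa only [hhom a f ha, hhom b g hb] using hsub (a • f) (b • g)

theorem abs_apply_sub_le_of_abs_sub_le (hsub : ∀ f g, T (f + g) ≤ T f + T g)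
    (hhom : ∀ (a : ℝ) f, 0 ≤ a → T (a • f) = a • T f) (hmono : Monotone T)
    {f g : C(X, ℝ)} {x : X} {ε C : ℝ} (hfx : 0 ≤ f x) (hε : 0 ≤ ε) (hC : 0 ≤ C)
    (hfg : ∀ y, |f y - f x| ≤ ε + C * g y) :
    |T f x - f x| ≤ f x * |T 1 x - 1| + ε * T 1 x + C * T g x := by
  have hupper : T f x ≤ (f x + ε) * T 1 x + C * T g x := by
    have hle : f ≤ (f x + ε) • 1 + C • g := ContinuousMap.le_def.mpr fun y => by
      have := (abs_le.mp (hfg y)).2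
      simp only [ContinuousMap.add_apply, ContinuousMap.smul_apply, ContinuousMap.one_apply,
        smul_eq_mul]
      linarith
    simpa using ContinuousMap.le_def.mp
      ((hmono hle).trans (apply_smul_add_smul_le hsub hhom (by linarith) hC 1 g)) x
  have hlower : f x * T 1 x ≤ T f x + ε * T 1 x + C * T g x := by
    have hle : f x • 1 ≤ f + (ε • 1 + C • g) := ContinuousMap.le_def.mpr fun y => by
      have := (abs_le.mp (hfg y)).1
      simp only [ContinuousMap.add_apply, ContinuousMap.smul_apply, ContinuousMap.one_apply,
        smul_eq_mul]
      linarith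
    have := ContinuousMap.le_def.mp ((hmono hle).trans ((hsub _ _).trans
      (add_le_add le_rfl (apply_smul_add_smul_le hsub hhom hε hC 1 g)))) x
    simp only [hhom _ _ hfx, ContinuousMap.add_apply, ContinuousMap.smul_apply,
      smul_eq_mul] at this
    linarith
  have hdev₁ := mul_le_mul_of_nonneg_left (le_abs_self (T 1 x - 1)) hfx
  have hdev₂ :=
    mul_le_mul_of_nonneg_left ((le_abs_self (1 - T 1 x)).trans (abs_sub_comm _ _).le) hfx
  rw [abs_sub_le_iff]
  constructor <;> linarith

end SublinearMonotone

/-- Nonlinear Korovkin theorem on a compact metric space, case of nonnegative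
functions: if the sublinear monotone operators `T_n` satisfy `T_n 1 → 1` uniformly
and `T_n(γ_x)(x) → 0` uniformly in `x`, then `T_n f → f` uniformly for every
nonnegative `f ∈ C(X)`. -/
theorem stmt11 {X : Type*} [MetricSpace X] [CompactSpace X]
    (γ : X × X → ℝ) (hγc : Continuous γ) (hγ0 : ∀ p, 0 ≤ γ p)
    (hγsep : ∀ x y, γ (x, y) = 0 → x = y)
    (Γ : X → C(X, ℝ)) (hΓ : ∀ x y, Γ x y = γ (x, y))
    (T : ℕ → C(X, ℝ) → C(X, ℝ))
    (hsub : ∀ n (f g : C(X, ℝ)), T n (f + g) ≤ T n f + T n g)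
    (hhom : ∀ n (a : ℝ) (f : C(X, ℝ)), 0 ≤ a → T n (a • f) = a • T n f)
    (hmono : ∀ n (f g : C(X, ℝ)), f ≤ g → T n f ≤ T n g)
    (h1 : TendstoUniformly (fun n x => T n 1 x) (fun _ => 1) atTop)
    (h2 : TendstoUniformly (fun n x => T n (Γ x) x) (fun _ => 0) atTop) :
    ∀ f : C(X, ℝ), 0 ≤ f →
      TendstoUniformly (fun n x => T n f x) (fun x => f x) atTop := by
  intro f hf
  rw [Metric.tendstoUniformly_iff] at h1 h2 ⊢
  intro ε hε
  obtain ⟨C, hC, hfC⟩ := exists_abs_sub_le_add_mul hγc hγ0 hγsep f (half_pos hε)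
  set A := ‖f‖ + ε / 2 + C
  have hA : 0 ≤ A := by positivity
  set δ := ε / (2 * (A + 1))
  have hδ : 0 < δ := by positivity
  filter_upwards [h1 δ hδ, h2 δ hδ] with n hn1 hn2 x
  have h1x : |T n 1 x - 1| < δ := by rw [← Real.dist_eq, dist_comm]; exact hn1 x
  have h2x : T n (Γ x) x < δ := by
    have := hn2 x
    rw [dist_comm, Real.dist_eq, sub_zero] at this
    exact (le_abs_self _).trans_lt this
  have hkey := abs_apply_sub_le_of_abs_sub_le (hsub n) (hhom n) (fun f g => hmono n f g)
    (hf x) (half_pos hε).le hC (g := Γ x) fun y => by rw [hΓ]; exact hfC x y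
  rw [dist_comm, Real.dist_eq]
  calc |T n f x - f x| ≤ f x * |T n 1 x - 1| + ε / 2 * T n 1 x + C * T n (Γ x) x := hkey
    _ ≤ ‖f‖ * δ + ε / 2 * (1 + δ) + C * δ := by
        gcongr
        · exact (le_abs_self _).trans (f.norm_coe_le_norm x)
        · linarith [(abs_lt.mp h1x).2]
    _ = ε / 2 + A * δ := by ring
    _ < ε / 2 + (A + 1) * δ := by gcongr; linarith
    _ = ε := by simp only [δ]; field_simp; ring
end

section
/- (Nonlinear Korovkin theorem, translatable case) Let X be a compact metric space, γ a separating function on X, and (T_n) a sequence of sublinear, monotone and translatable operators from C(X) to C(X) with T_n(1) → 1 uniformly and T_n(γ_x)(x) → 0 uniformly in x. Then T_n(f) → f uniformly on X for every f ∈ C(X) (of arbitrary sign). -/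
open Filter

/-- Nonlinear Korovkin theorem, translatable case: if the sublinear, monotone and
translatable operators `T_n` satisfy `T_n 1 → 1` uniformly and `T_n(γ_x)(x) → 0`
uniformly in `x`, then `T_n f → f` uniformly for every `f ∈ C(X)`. -/
theorem stmt12 {X : Type*} [MetricSpace X] [CompactSpace X]
    (γ : X × X → ℝ) (hγc : Continuous γ) (hγ0 : ∀ p, 0 ≤ γ p)
    (hγsep : ∀ x y, γ (x, y) = 0 → x = y)
    (Γ : X → C(X, ℝ)) (hΓ : ∀ x y, Γ x y = γ (x, y))
    (T : ℕ → C(X, ℝ) → C(X, ℝ))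
    (hsub : ∀ n (f g : C(X, ℝ)), T n (f + g) ≤ T n f + T n g)
    (hhom : ∀ n (a : ℝ) (f : C(X, ℝ)), 0 ≤ a → T n (a • f) = a • T n f)
    (hmono : ∀ n (f g : C(X, ℝ)), f ≤ g → T n f ≤ T n g)
    (htr : ∀ n (f : C(X, ℝ)) (a : ℝ), 0 ≤ a → T n (f + a • 1) = T n f + a • T n 1)
    (h1 : TendstoUniformly (fun n x => T n 1 x) (fun _ => 1) atTop)
    (h2 : TendstoUniformly (fun n x => T n (Γ x) x) (fun _ => 0) atTop) :
    ∀ f : C(X, ℝ),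
      TendstoUniformly (fun n x => T n f x) (fun x => f x) atTop := by
  -- T n 0 = 0
  have hT0 : ∀ n, T n (0 : C(X, ℝ)) = 0 := by
    intro n
    have := hhom n 0 0 le_rfl
    simpa using this
  -- translatability for all real a
  have htr' : ∀ n (f : C(X, ℝ)) (a : ℝ), T n (f + a • 1) = T n f + a • T n 1 := by
    intro n f a
    rcases le_or_gt 0 a with ha | ha
    · exact htr n f a ha
    · have h := htr n (f + a • 1) (-a) (by linarith)
      have heq : f + a • (1 : C(X, ℝ)) + (-a) • 1 = f := by
        ext y; simp
      rw [heq] at h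
      rw [h]
      ext y; simp
  intro f
  -- key uniform continuity estimate via γ
  have key : ∀ ε : ℝ, 0 < ε → ∃ K : ℝ, 0 ≤ K ∧
      ∀ x y : X, |f y - f x| ≤ ε + K * γ (x, y) := by
    intro ε hε
    set S : Set (X × X) := {p | ε ≤ |f p.2 - f p.1|} with hS
    have hSclosed : IsClosed S := by
      apply isClosed_le continuous_const
      exact continuous_abs.comp ((f.continuous.comp continuous_snd).sub
        (f.continuous.comp continuous_fst))
    by_cases hne : S.Nonempty
    · obtain ⟨p₀, hp₀S, hp₀min⟩ :=
        hSclosed.isCompact.exists_isMinOn hne hγc.continuousOn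
      have hδpos : 0 < γ p₀ := by
        rcases lt_or_eq_of_le (hγ0 p₀) with h | h
        · exact h
        · exfalso
          have : p₀.1 = p₀.2 := hγsep p₀.1 p₀.2 (by rw [← h])
          have h2' : ε ≤ |f p₀.2 - f p₀.1| := hp₀S
          rw [this] at h2'
          simp at h2'
          linarith
      refine ⟨2 * ‖f‖ / γ p₀, by positivity, ?_⟩
      intro x y
      by_cases hxy : ε ≤ |f y - f x|
      · have hmem : (x, y) ∈ S := hxy
        have hδ : γ p₀ ≤ γ (x, y) := hp₀min hmem
        have hfy := f.norm_coe_le_norm y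
        have hfx := f.norm_coe_le_norm x
        rw [Real.norm_eq_abs] at hfy hfx
        have hfy' := abs_le.mp hfy
        have hfx' := abs_le.mp hfx
        have habs : |f y - f x| ≤ 2 * ‖f‖ := by
          rw [abs_le]; constructor <;> linarith
        have hK : 2 * ‖f‖ / γ p₀ * γ p₀ = 2 * ‖f‖ := by
          field_simp
        have : 2 * ‖f‖ ≤ 2 * ‖f‖ / γ p₀ * γ (x, y) := by
          have hm := mul_le_mul_of_nonneg_left hδ
            (show (0:ℝ) ≤ 2 * ‖f‖ / γ p₀ by positivity)
          linarith
        linarith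
      · push_neg at hxy
        have : 0 ≤ 2 * ‖f‖ / γ p₀ * γ (x, y) := mul_nonneg (by positivity) (hγ0 _)
        linarith
    · refine ⟨0, le_rfl, ?_⟩
      intro x y
      have : (x, y) ∉ S := fun h => hne ⟨_, h⟩
      simp only [hS, Set.mem_setOf_eq, not_le] at this
      simp only [zero_mul, add_zero]
      linarith
  -- main argument
  rw [Metric.tendstoUniformly_iff]
  intro ε₀ hε₀
  obtain ⟨K, hK0, hK⟩ := key (ε₀ / 4) (by positivity)
  rw [Metric.tendstoUniformly_iff] at h1 h2
  have E1 := h1 (min 1 (ε₀ / (4 * (‖f‖ + 1)))) (by positivity)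
  have E2 := h2 (ε₀ / (4 * (K + 1))) (by positivity)
  filter_upwards [E1, E2] with n hn1 hn2 x
  -- notation
  set a : ℝ := f x with ha
  set g : C(X, ℝ) := f + (-a) • 1 with hg
  set e : ℝ := ε₀ / 4 with he
  have he0 : (0:ℝ) ≤ e := by positivity
  -- pointwise bound on g and -g
  have hle1 : g ≤ K • Γ x + e • 1 := by
    rw [ContinuousMap.le_def]
    intro y
    have := hK x y
    have h1' := abs_le.mp this |>.2
    have h2' := abs_le.mp this |>.1
    simp only [hg, ContinuousMap.add_apply, ContinuousMap.smul_apply,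
      ContinuousMap.one_apply, ContinuousMap.coe_smul, smul_eq_mul, hΓ]
    linarith
  have hle2 : -g ≤ K • Γ x + e • 1 := by
    rw [ContinuousMap.le_def]
    intro y
    have := hK x y
    have h2' := abs_le.mp this |>.1
    simp only [hg, ContinuousMap.neg_apply, ContinuousMap.add_apply,
      ContinuousMap.smul_apply, ContinuousMap.one_apply, smul_eq_mul, hΓ]
    linarith
  -- T of the bound
  have hTbound : T n (K • Γ x + e • 1) = K • T n (Γ x) + e • T n 1 := by
    rw [htr n (K • Γ x) e he0, hhom n K (Γ x) hK0]
  have hub : T n g ≤ K • T n (Γ x) + e • T n 1 := by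
    rw [← hTbound]; exact hmono n _ _ hle1
  have hub' : T n (-g) ≤ K • T n (Γ x) + e • T n 1 := by
    rw [← hTbound]; exact hmono n _ _ hle2
  have hlb : -(K • T n (Γ x) + e • T n 1) ≤ T n g := by
    have h0 : (0 : C(X, ℝ)) ≤ T n g + T n (-g) := by
      have := hsub n g (-g)
      rw [add_neg_cancel, hT0] at this
      exact this
    have := ContinuousMap.le_def.mp h0
    rw [ContinuousMap.le_def]
    intro y
    have h0y := ContinuousMap.le_def.mp h0 y
    have huby := ContinuousMap.le_def.mp hub' y
    simp only [ContinuousMap.add_apply, ContinuousMap.neg_apply,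
      ContinuousMap.zero_apply] at h0y huby ⊢
    linarith
  -- translating: T n g = T n f - a • T n 1
  have hTg : T n g = T n f + (-a) • T n 1 := htr' n f (-a)
  -- evaluate at x
  have hubx := ContinuousMap.le_def.mp hub x
  have hlbx := ContinuousMap.le_def.mp hlb x
  rw [hTg] at hubx hlbx
  simp only [ContinuousMap.add_apply, ContinuousMap.smul_apply,
    ContinuousMap.neg_apply, smul_eq_mul, neg_mul] at hubx hlbx
  set u : ℝ := T n 1 x with hu
  set t : ℝ := T n (Γ x) x with ht
  -- hubx : T n f x + -(a * u) ≤ K * t + e * u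
  -- hlbx : -(K * t + e * u) ≤ T n f x + -(a * u)
  have habs : |T n f x - a * u| ≤ K * t + e * u := by
    rw [abs_le]; constructor <;> linarith
  -- bounds from hypotheses
  have hn1x := hn1 x
  have hn2x := hn2 x
  rw [Real.dist_eq] at hn1x hn2x
  have hu1 : |1 - u| < min 1 (ε₀ / (4 * (‖f‖ + 1))) := hn1x
  have ht1 : |(0:ℝ) - t| < ε₀ / (4 * (K + 1)) := hn2x
  rw [Real.dist_eq]
  -- |f x - T n f x| ≤ |T n f x - a*u| + |a| * |u - 1|
  have hafx : |a| ≤ ‖f‖ := by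
    have := f.norm_coe_le_norm x
    rw [Real.norm_eq_abs] at this
    exact this
  have hsplit : |f x - T n f x| ≤ |T n f x - a * u| + |a| * |1 - u| := by
    have : f x - T n f x = -(T n f x - a * u) + a * (1 - u) := by
      rw [← ha]; ring
    rw [this]
    calc |-(T n f x - a * u) + a * (1 - u)|
        ≤ |-(T n f x - a * u)| + |a * (1 - u)| := abs_add_le _ _
      _ = |T n f x - a * u| + |a| * |1 - u| := by rw [abs_neg, abs_mul]
  -- numeric conclusion
  have hu2 : u < 2 := by
    have h1' := lt_of_lt_of_le hu1 (min_le_left _ _)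
    have := abs_lt.mp h1'
    linarith [this.1]
  have htb : t ≤ ε₀ / (4 * (K + 1)) := by
    have := abs_le.mp ht1.le
    have h' := this.1
    linarith
  have hKt : K * t ≤ ε₀ / 4 := by
    have h1' : K * t ≤ K * (ε₀ / (4 * (K + 1))) :=
      mul_le_mul_of_nonneg_left htb hK0
    have h2' : K * (ε₀ / (4 * (K + 1))) ≤ ε₀ / 4 := by
      rw [mul_div_assoc'] at *
      rw [div_le_div_iff₀ (by positivity) (by norm_num)]
      nlinarith
    linarith
  have hau : |a| * |1 - u| ≤ ε₀ / 4 := by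
    have h1' : |a| * |1 - u| ≤ ‖f‖ * (ε₀ / (4 * (‖f‖ + 1))) :=
      mul_le_mul hafx (le_of_lt (lt_of_lt_of_le hu1 (min_le_right _ _)))
        (abs_nonneg _) (norm_nonneg _)
    have h2' : ‖f‖ * (ε₀ / (4 * (‖f‖ + 1))) ≤ ε₀ / 4 := by
      rw [mul_div_assoc']
      rw [div_le_div_iff₀ (by positivity) (by norm_num)]
      nlinarith [norm_nonneg f]
    linarith
  have heu : e * u < ε₀ / 2 := by
    have he' : (0:ℝ) < e := by positivity
    nlinarith
  calc |f x - T n f x| ≤ |T n f x - a * u| + |a| * |1 - u| := hsplit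
    _ ≤ (K * t + e * u) + |a| * |1 - u| := by linarith
    _ < ε₀ := by linarith
end

section
/- (Quantitative Korovkin estimate for Lipschitz functions) Let X be a compact metric space and (T_n) a sequence of unital, sublinear and monotone operators from C(X) to C(X). If f ∈ C(X) is nonnegative and Lipschitz with constant K, then for all x ∈ X and n, |T_n(f)(x) - f(x)| ≤ K · sup_{y∈X} |T_n(d_y²)(y)|^{1/2}, where d_y(z) = d(y,z). -/
/-!
For a nonnegative `K`-Lipschitz `f` and `t > 0`, the inequality `K r ≤ K t / 2 + K r² / (2 t)`
sandwiches `f` between `f x ∓ (K t / 2 + K / (2 t) · d_x²)`. Applying a unital, sublinear, monotone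
`T` and evaluating at `x` gives `|T f x - f x| ≤ K t / 2 + K / (2 t) · T(d_x²)(x)`, and the choice
`t = √(T(d_x²)(x))` turns the right-hand side into `K · √(T(d_x²)(x))`.
-/

structure IsUnitalMonotoneSublinear {X : Type*} [TopologicalSpace X]
    (T : C(X, ℝ) → C(X, ℝ)) : Prop where
  map_one : T 1 = 1
  map_add_le : ∀ f g, T (f + g) ≤ T f + T g
  map_smul_of_nonneg : ∀ (a : ℝ) f, 0 ≤ a → T (a • f) = a • T f
  monotone : Monotone T

namespace IsUnitalMonotoneSublinear

section Topological

variable {X : Type*} [TopologicalSpace X] {T : C(X, ℝ) → C(X, ℝ)}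
  (hT : IsUnitalMonotoneSublinear T)
include hT

theorem map_zero : T 0 = 0 := by
  simpa using hT.map_smul_of_nonneg 0 0 le_rfl

theorem nonneg {g : C(X, ℝ)} (hg : 0 ≤ g) : 0 ≤ T g :=
  hT.map_zero ▸ hT.monotone hg

theorem map_const {c : ℝ} (hc : 0 ≤ c) : T (c • 1) = c • 1 := by
  rw [hT.map_smul_of_nonneg c 1 hc, hT.map_one]

theorem map_add_const_add_smul_le {c b : ℝ} (hc : 0 ≤ c) (hb : 0 ≤ b) (g h : C(X, ℝ)) :
    T (g + c • 1 + b • h) ≤ T g + c • 1 + b • T h :=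
  calc T (g + c • 1 + b • h) ≤ T (g + c • 1) + T (b • h) := hT.map_add_le _ _
    _ ≤ T g + T (c • 1) + T (b • h) := add_le_add_left (hT.map_add_le _ _) _
    _ = T g + c • 1 + b • T h := by rw [hT.map_const hc, hT.map_smul_of_nonneg b h hb]

theorem abs_apply_sub_le {f h : C(X, ℝ)} {x : X} {c b : ℝ} (hfx : 0 ≤ f x) (hc : 0 ≤ c)
    (hb : 0 ≤ b) (hdev : ∀ y, |f y - f x| ≤ c + b * h y) :
    |T f x - f x| ≤ c + b * T h x := by
  have hTfx : T (f x • 1) = f x • 1 := hT.map_const hfx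
  have hup : f ≤ f x • 1 + c • 1 + b • h := ContinuousMap.le_def.mpr fun y => by
    simp only [ContinuousMap.add_apply, ContinuousMap.smul_apply, ContinuousMap.one_apply,
      smul_eq_mul, mul_one]
    linarith [(abs_le.mp (hdev y)).2]
  have hlo : f x • 1 ≤ f + c • 1 + b • h := ContinuousMap.le_def.mpr fun y => by
    simp only [ContinuousMap.add_apply, ContinuousMap.smul_apply, ContinuousMap.one_apply,
      smul_eq_mul, mul_one]
    linarith [(abs_le.mp (hdev y)).1]
  have hTup := ContinuousMap.le_def.mp
    ((hT.monotone hup).trans (hT.map_add_const_add_smul_le hc hb _ h)) x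
  have hTlo := ContinuousMap.le_def.mp
    ((hT.monotone hlo).trans (hT.map_add_const_add_smul_le hc hb f h)) x
  simp only [hTfx, ContinuousMap.add_apply, ContinuousMap.smul_apply, ContinuousMap.one_apply,
    smul_eq_mul, mul_one] at hTup hTlo
  exact abs_le.mpr ⟨by linarith, by linarith⟩

end Topological

section Metric

variable {X : Type*} [MetricSpace X] {T : C(X, ℝ) → C(X, ℝ)}
  (hT : IsUnitalMonotoneSublinear T) {D : X → C(X, ℝ)} (hD : ∀ y z, D y z = dist y z ^ 2)
include hT hD

theorem apply_dist_sq_nonneg (x y : X) : 0 ≤ T (D y) x :=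
  hT.nonneg (fun z => by simp [hD y z]) x

theorem abs_apply_sub_le_of_lipschitz {f : C(X, ℝ)} {x : X} {K t : ℝ} (hfx : 0 ≤ f x)
    (hK : 0 ≤ K) (ht : 0 < t) (hlip : ∀ y, |f y - f x| ≤ K * dist x y) :
    |T f x - f x| ≤ K * t / 2 + K / (2 * t) * T (D x) x := by
  refine hT.abs_apply_sub_le hfx (by positivity) (by positivity) fun y => (hlip y).trans ?_
  have hamgm : 2 * t * dist x y ≤ t ^ 2 + dist x y ^ 2 := by
    nlinarith [sq_nonneg (dist x y - t)]
  have hdist : dist x y ≤ t / 2 + dist x y ^ 2 / (2 * t) := by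
    rw [div_add_div _ _ two_ne_zero (by positivity), le_div_iff₀ (by positivity)]
    nlinarith
  calc K * dist x y ≤ K * (t / 2 + dist x y ^ 2 / (2 * t)) := by gcongr
    _ = K * t / 2 + K / (2 * t) * D x y := by rw [hD]; ring

theorem bddAbove_range_sqrt_abs [CompactSpace X] :
    BddAbove (Set.range fun y => √|T (D y) y|) := by
  set C := Metric.diam (Set.univ : Set X)
  refine ⟨C, Set.forall_mem_range.mpr fun y => ?_⟩
  have hDy : D y ≤ C ^ 2 • 1 := ContinuousMap.le_def.mpr fun z => by
    have := Metric.dist_le_diam_of_mem isCompact_univ.isBounded (Set.mem_univ y) (Set.mem_univ z)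
    simp only [hD, ContinuousMap.smul_apply, ContinuousMap.one_apply, smul_eq_mul, mul_one]
    gcongr
  have hTDy : T (D y) y ≤ C ^ 2 := by
    simpa using (hT.monotone hDy).trans (hT.map_const (sq_nonneg C)).le y
  rw [abs_of_nonneg (hT.apply_dist_sq_nonneg hD y y)]
  exact (Real.sqrt_le_sqrt hTDy).trans_eq (Real.sqrt_sq Metric.diam_nonneg)

end Metric

end IsUnitalMonotoneSublinear

theorem le_mul_sqrt_of_forall_pos {e K a : ℝ} (hK : 0 ≤ K) (ha : 0 ≤ a)
    (h : ∀ t > 0, e ≤ K * t / 2 + K / (2 * t) * a) : e ≤ K * √a := by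
  rcases ha.eq_or_lt with rfl | ha
  · simp only [mul_zero, add_zero, Real.sqrt_zero] at h ⊢
    by_contra! he
    have := h (e / (K + 1)) (by positivity)
    rw [le_div_iff₀ two_pos, mul_div_assoc', le_div_iff₀ (by positivity)] at this
    nlinarith
  · have hs : 0 < √a := Real.sqrt_pos.mpr ha
    convert h (√a) hs using 1
    field_simp
    rw [Real.sq_sqrt ha.le]
    ring

/-- Quantitative Korovkin estimate for Lipschitz functions: for unital, sublinear,
monotone operators `T_n` on `C(X)` and a nonnegative `K`-Lipschitz `f`,
`|T_n f x - f x| ≤ K · sup_y |T_n(d_y²)(y)|^{1/2}`. -/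
theorem stmt13 {X : Type*} [MetricSpace X] [CompactSpace X]
    (T : ℕ → C(X, ℝ) → C(X, ℝ))
    (hunit : ∀ n, T n 1 = 1)
    (hsub : ∀ n (f g : C(X, ℝ)), T n (f + g) ≤ T n f + T n g)
    (hhom : ∀ n (a : ℝ) (f : C(X, ℝ)), 0 ≤ a → T n (a • f) = a • T n f)
    (hmono : ∀ n (f g : C(X, ℝ)), f ≤ g → T n f ≤ T n g)
    (D : X → C(X, ℝ)) (hD : ∀ y z, D y z = dist y z ^ 2)
    (f : C(X, ℝ)) (hf0 : 0 ≤ f) (K : ℝ) (hK : 0 ≤ K)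
    (hlip : ∀ x y : X, |f x - f y| ≤ K * dist x y) :
    ∀ (x : X) (n : ℕ),
      |T n f x - f x| ≤ K * ⨆ y : X, Real.sqrt |T n (D y) y| := by
  intro x n
  have hT : IsUnitalMonotoneSublinear (T n) :=
    ⟨hunit n, hsub n, hhom n, fun f g => hmono n f g⟩
  have hTDx := hT.apply_dist_sq_nonneg hD x x
  have hlip_x : ∀ y, |f y - f x| ≤ K * dist x y := fun y => by
    rw [abs_sub_comm]; exact hlip x y
  calc |T n f x - f x| ≤ K * √(T n (D x) x) :=
        le_mul_sqrt_of_forall_pos hK hTDx fun t ht =>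
          hT.abs_apply_sub_le_of_lipschitz hD (hf0 x) hK ht hlip_x
    _ = K * √|T n (D x) x| := by rw [abs_of_nonneg hTDx]
    _ ≤ K * ⨆ y, √|T n (D y) y| := by
        gcongr
        exact le_ciSup (hT.bddAbove_range_sqrt_abs hD) x
end

section
/- (Nonlinear Korovkin theorem in ℝ^N) Let X be a compact subset of ℝ^N and (T_n) a sequence of sublinear and monotone operators from C(X) into itself such that T_n(g) → g uniformly on X for each of the 2N+2 test functions 1, pr_1, ..., pr_N, −pr_1, ..., −pr_N, and Σ_{k=1}^N pr_k². Then T_n(f) → f uniformly on X for every nonnegative f ∈ C(X); if moreover each T_n is translatable, then T_n(f) → f uniformly for all f ∈ C(X). -/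
open Filter

/-- Pointwise finite subadditivity for a subadditive operator on `C(Y, ℝ)`. -/
lemma korovkin_aux_sum {Y : Type*} [TopologicalSpace Y] (T : C(Y, ℝ) → C(Y, ℝ))
    (hsub : ∀ f g : C(Y, ℝ), T (f + g) ≤ T f + T g) (h0 : T 0 = 0)
    {ι : Type*} (s : Finset ι) (g : ι → C(Y, ℝ)) (x : Y) :
    T (∑ i ∈ s, g i) x ≤ ∑ i ∈ s, T (g i) x := by
  classical
  induction s using Finset.induction_on with
  | empty => simp [h0]
  | @insert a s' ha ih =>
      rw [Finset.sum_insert ha, Finset.sum_insert ha]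
      have h1 := ContinuousMap.le_def.mp (hsub (g a) (∑ i ∈ s', g i)) x
      rw [ContinuousMap.add_apply] at h1
      linarith

set_option maxHeartbeats 2000000 in
/-- Nonlinear Korovkin theorem on a compact subset `X ⊆ ℝ^N`: if sublinear monotone
operators `T_n : C(X) → C(X)` satisfy `T_n g → g` uniformly for the test functions
`1, ±pr_1, ..., ±pr_N, Σ pr_k²`, then `T_n f → f` uniformly for all nonnegative
`f ∈ C(X)`; if the `T_n` are moreover translatable, for all `f ∈ C(X)`. -/
theorem stmt14 {N : ℕ} (X : Set (EuclideanSpace ℝ (Fin N))) (hX : IsCompact X)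
    (T : ℕ → C(X, ℝ) → C(X, ℝ))
    (hsub : ∀ n (f g : C(X, ℝ)), T n (f + g) ≤ T n f + T n g)
    (hhom : ∀ n (a : ℝ) (f : C(X, ℝ)), 0 ≤ a → T n (a • f) = a • T n f)
    (hmono : ∀ n (f g : C(X, ℝ)), f ≤ g → T n f ≤ T n g)
    (pr : Fin N → C(X, ℝ)) (hpr : ∀ (k : Fin N) (x : X), pr k x = (x : EuclideanSpace ℝ (Fin N)) k)
    (sq : C(X, ℝ)) (hsq : ∀ x : X, sq x = ∑ k : Fin N, ((x : EuclideanSpace ℝ (Fin N)) k) ^ 2)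
    (h1 : TendstoUniformly (fun n x => T n 1 x) (fun _ => 1) atTop)
    (hprPos : ∀ k : Fin N, TendstoUniformly (fun n x => T n (pr k) x) (fun x => pr k x) atTop)
    (hprNeg : ∀ k : Fin N, TendstoUniformly (fun n x => T n (-pr k) x) (fun x => -pr k x) atTop)
    (hsq' : TendstoUniformly (fun n x => T n sq x) (fun x => sq x) atTop) :
    (∀ f : C(X, ℝ), 0 ≤ f →
      TendstoUniformly (fun n x => T n f x) (fun x => f x) atTop) ∧
    ((∀ n (f : C(X, ℝ)) (a : ℝ), 0 ≤ a → T n (f + a • 1) = T n f + a • T n 1) →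
      ∀ f : C(X, ℝ),
        TendstoUniformly (fun n x => T n f x) (fun x => f x) atTop) := by
  haveI : CompactSpace X := isCompact_iff_compactSpace.mp hX
  have hT0 : ∀ n, T n (0 : C(X, ℝ)) = 0 := by
    intro n
    have := hhom n 0 0 le_rfl
    simpa using this
  -- norm squared identity
  have hnorm : ∀ v : EuclideanSpace ℝ (Fin N), ‖v‖ ^ 2 = ∑ k, (v k) ^ 2 := by
    intro v
    rw [EuclideanSpace.norm_eq, Real.sq_sqrt (by positivity)]
    exact Finset.sum_congr rfl fun k _ => by rw [Real.norm_eq_abs, sq_abs]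
  -- coordinate bound
  have hcoord : ∀ (v : EuclideanSpace ℝ (Fin N)) (k : Fin N), |v k| ≤ ‖v‖ := by
    intro v k
    have h1 : (v k) ^ 2 ≤ ‖v‖ ^ 2 := by
      rw [hnorm]
      exact Finset.single_le_sum (fun i _ => sq_nonneg (v i)) (Finset.mem_univ k)
    calc |v k| = Real.sqrt ((v k) ^ 2) := (Real.sqrt_sq_eq_abs _).symm
      _ ≤ Real.sqrt (‖v‖ ^ 2) := Real.sqrt_le_sqrt h1
      _ = ‖v‖ := by rw [Real.sqrt_sq (norm_nonneg v)]
  -- radius bound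
  obtain ⟨r, hr⟩ := hX.isBounded.subset_closedBall 0
  set R : ℝ := max r 0 with hRdef
  have hR0 : (0 : ℝ) ≤ R := le_max_right _ _
  have hyR : ∀ y : X, ‖(y : EuclideanSpace ℝ (Fin N))‖ ≤ R := by
    intro y
    have := hr y.2
    rw [Metric.mem_closedBall, dist_zero_right] at this
    exact this.trans (le_max_left _ _)
  have main : ∀ f : C(X, ℝ), 0 ≤ f →
      TendstoUniformly (fun n x => T n f x) (fun x => f x) atTop := by
    intro f hf
    rw [Metric.tendstoUniformly_iff]
    intro ε hε
    -- uniform continuity estimate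
    have huc : UniformContinuous f := CompactSpace.uniformContinuous_of_continuous f.continuous
    obtain ⟨δ, hδ0, hδ⟩ := Metric.uniformContinuous_iff.mp huc (ε / 4) (by positivity)
    set M : ℝ := ‖f‖ with hMdef
    have hM0 : (0 : ℝ) ≤ M := norm_nonneg f
    have hMb : ∀ x : X, |f x| ≤ M := by
      intro x
      have := f.norm_coe_le_norm x
      rwa [Real.norm_eq_abs] at this
    set C : ℝ := 2 * M / δ ^ 2 with hCdef
    have hC0 : (0 : ℝ) ≤ C := by positivity
    have key : ∀ x y : X, |f x - f y| ≤ ε / 4 +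
        C * ‖(x : EuclideanSpace ℝ (Fin N)) - (y : EuclideanSpace ℝ (Fin N))‖ ^ 2 := by
      intro x y
      rcases lt_or_ge (dist x y) δ with h | h
      · have h2 := hδ h
        rw [Real.dist_eq] at h2
        have h3 : 0 ≤ C * ‖(x : EuclideanSpace ℝ (Fin N)) - (y : EuclideanSpace ℝ (Fin N))‖ ^ 2 := by
          positivity
        linarith
      · have hd : dist x y = ‖(x : EuclideanSpace ℝ (Fin N)) - (y : EuclideanSpace ℝ (Fin N))‖ := by
          rw [Subtype.dist_eq, dist_eq_norm]
        have h1 : δ ^ 2 ≤ ‖(x : EuclideanSpace ℝ (Fin N)) - (y : EuclideanSpace ℝ (Fin N))‖ ^ 2 := by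
          rw [← hd]
          exact pow_le_pow_left₀ hδ0.le h 2
        have h2 : |f x - f y| ≤ 2 * M := by
          have := abs_sub (f x) (f y)
          have hx := hMb x
          have hy := hMb y
          calc |f x - f y| ≤ |f x| + |f y| := abs_sub _ _
            _ ≤ 2 * M := by linarith
        have h3 : 2 * M ≤ C * ‖(x : EuclideanSpace ℝ (Fin N)) - (y : EuclideanSpace ℝ (Fin N))‖ ^ 2 := by
          have h4 : C * δ ^ 2 = 2 * M := by
            rw [hCdef]
            field_simp
          calc 2 * M = C * δ ^ 2 := h4.symm
            _ ≤ _ := mul_le_mul_of_nonneg_left h1 hC0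
        linarith
    -- the uniform smallness parameter
    set K : ℝ := M + ε + C * R ^ 2 + C + 2 * N * C * R + 1 with hKdef
    have hK0 : (0 : ℝ) < K := by positivity
    set η : ℝ := ε / (4 * K) with hηdef
    have hη0 : (0 : ℝ) < η := by positivity
    have E1 := Metric.tendstoUniformly_iff.mp h1 η hη0
    have E2 := Metric.tendstoUniformly_iff.mp hsq' η hη0
    have E3 : ∀ᶠ n in atTop, ∀ k : Fin N, ∀ x : X, dist (pr k x) (T n (pr k) x) < η :=
      eventually_all.mpr fun k => Metric.tendstoUniformly_iff.mp (hprPos k) η hη0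
    have E4 : ∀ᶠ n in atTop, ∀ k : Fin N, ∀ x : X, dist (-pr k x) (T n (-pr k) x) < η :=
      eventually_all.mpr fun k => Metric.tendstoUniformly_iff.mp (hprNeg k) η hη0
    filter_upwards [E1, E2, E3, E4] with n e1 e2 e3 e4
    intro y
    set yv : EuclideanSpace ℝ (Fin N) := (y : EuclideanSpace ℝ (Fin N)) with hyvdef
    set a : Fin N → ℝ := fun k => C * |2 * yv k| with hadef
    have ha0 : ∀ k, 0 ≤ a k := fun k => mul_nonneg hC0 (abs_nonneg _)
    set e : Fin N → C(X, ℝ) := fun k => if 0 ≤ yv k then -pr k else pr k with hedef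
    -- pointwise value of aₖ * eₖ
    have hae : ∀ (k : Fin N) (x : X),
        a k * e k x = C * (-2 * yv k * (x : EuclideanSpace ℝ (Fin N)) k) := by
      intro k x
      by_cases h : 0 ≤ yv k
      · simp only [hadef, hedef, if_pos h, ContinuousMap.neg_apply, hpr k x]
        rw [abs_of_nonneg (by linarith)]
        ring
      · simp only [hadef, hedef, if_neg h, hpr k x]
        rw [abs_of_neg (by linarith)]
        ring
    -- error bounds for eₖ
    have herr_e : ∀ k : Fin N, |T n (e k) y - e k y| ≤ η := by
      intro k
      by_cases h : 0 ≤ yv k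
      · have := e4 k y
        rw [Real.dist_eq, abs_sub_comm] at this
        simp only [hedef, if_pos h]
        exact this.le
      · have := e3 k y
        rw [Real.dist_eq, abs_sub_comm] at this
        simp only [hedef, if_neg h]
        exact this.le
    have herr1 : |T n 1 y - 1| ≤ η := by
      have := e1 y
      rw [Real.dist_eq, abs_sub_comm] at this
      exact this.le
    have herrsq : |T n sq y - sq y| ≤ η := by
      have := e2 y
      rw [Real.dist_eq, abs_sub_comm] at this
      exact this.le
    -- key algebraic identity
    have hsum : ∀ x : X, C * sq x + (∑ k, a k * e k x) + C * ‖yv‖ ^ 2 =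
        C * ‖(x : EuclideanSpace ℝ (Fin N)) - yv‖ ^ 2 := by
      intro x
      have h1 : ∑ k, a k * e k x = C * ∑ k, (-2 * yv k * (x : EuclideanSpace ℝ (Fin N)) k) := by
        rw [Finset.mul_sum]
        exact Finset.sum_congr rfl fun k _ => hae k x
      have h2 : ‖(x : EuclideanSpace ℝ (Fin N)) - yv‖ ^ 2 =
          ∑ k, ((x : EuclideanSpace ℝ (Fin N)) k - yv k) ^ 2 := by
        rw [hnorm]
        exact Finset.sum_congr rfl fun k _ => by rw [PiLp.sub_apply]
      have h3 : ∑ k, ((x : EuclideanSpace ℝ (Fin N)) k - yv k) ^ 2 =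
          ∑ k, ((x : EuclideanSpace ℝ (Fin N)) k) ^ 2 +
          ∑ k, (-2 * yv k * (x : EuclideanSpace ℝ (Fin N)) k) + ∑ k, (yv k) ^ 2 := by
        rw [← Finset.sum_add_distrib, ← Finset.sum_add_distrib]
        exact Finset.sum_congr rfl fun k _ => by ring
      rw [hsq x, hnorm yv, h1, h2, h3]
      ring
    have hsum_y : C * sq y + (∑ k, a k * e k y) + C * ‖yv‖ ^ 2 = 0 := by
      rw [hsum y, sub_self, norm_zero]
      ring
    -- coefficient bounds
    have hfy0 : 0 ≤ f y := ContinuousMap.le_def.mp hf y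
    have hfyM : f y ≤ M := (le_abs_self _).trans (hMb y)
    have hyvR : ‖yv‖ ≤ R := hyR y
    have hyv2 : C * ‖yv‖ ^ 2 ≤ C * R ^ 2 :=
      mul_le_mul_of_nonneg_left (pow_le_pow_left₀ (norm_nonneg _) hyvR 2) hC0
    have hsuma : ∑ k, a k ≤ 2 * N * C * R := by
      have h1 : ∀ k : Fin N, a k ≤ 2 * C * R := by
        intro k
        have h2 : |2 * yv k| = 2 * |yv k| := by rw [abs_mul, abs_two]
        have h3 : |yv k| ≤ R := (hcoord yv k).trans hyvR
        calc a k = C * (2 * |yv k|) := by rw [hadef]; simp [h2]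
          _ ≤ C * (2 * R) := by
            apply mul_le_mul_of_nonneg_left _ hC0
            linarith
          _ = 2 * C * R := by ring
      calc ∑ k, a k ≤ ∑ _k : Fin N, 2 * C * R := Finset.sum_le_sum fun k _ => h1 k
        _ = N * (2 * C * R) := by
          rw [Finset.sum_const, Finset.card_univ, Fintype.card_fin, nsmul_eq_mul]
        _ = 2 * N * C * R := by ring
    have hsuma0 : 0 ≤ ∑ k, a k := Finset.sum_nonneg fun k _ => ha0 k
    have hKη : K * η = ε / 4 := by
      rw [hηdef]
      field_simp
    clear_value yv a e η K C M R
    -- UPPER BOUND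
    set b : ℝ := f y + ε / 4 + C * ‖yv‖ ^ 2 with hbdef
    have hb0 : 0 ≤ b := by
      have h2 : 0 ≤ C * ‖yv‖ ^ 2 := mul_nonneg hC0 (by positivity)
      rw [hbdef]
      linarith
    clear_value b
    have hup : f ≤ b • (1 : C(X, ℝ)) + C • sq + ∑ k, a k • e k := by
      rw [ContinuousMap.le_def]
      intro x
      have hx := key x y
      rw [← hyvdef] at hx
      have h1 := hsum x
      have h2 : (b • (1 : C(X, ℝ)) + C • sq + ∑ k, a k • e k) x =
          b + C * sq x + ∑ k, a k * e k x := by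
        simp [ContinuousMap.sum_apply]
      rw [h2]
      have h3 : f x - f y ≤ |f x - f y| := le_abs_self _
      rw [hbdef]
      linarith
    have upper : T n f y ≤ b * T n 1 y + C * T n sq y + ∑ k, a k * T n (e k) y := by
      have s1 := ContinuousMap.le_def.mp (hmono n _ _ hup) y
      have s2 := ContinuousMap.le_def.mp
        (hsub n (b • (1 : C(X, ℝ)) + C • sq) (∑ k, a k • e k)) y
      rw [ContinuousMap.add_apply] at s2
      have s3 := ContinuousMap.le_def.mp (hsub n (b • (1 : C(X, ℝ))) (C • sq)) y
      rw [ContinuousMap.add_apply] at s3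
      have s4 := korovkin_aux_sum (T n) (hsub n) (hT0 n) Finset.univ (fun k => a k • e k) y
      have s5 : ∑ k, T n (a k • e k) y = ∑ k, a k * T n (e k) y :=
        Finset.sum_congr rfl fun k _ => by rw [hhom n (a k) (e k) (ha0 k)]; simp
      have s6 : T n (b • (1 : C(X, ℝ))) y = b * T n 1 y := by
        rw [hhom n b 1 hb0]; simp
      have s7 : T n (C • sq) y = C * T n sq y := by
        rw [hhom n C sq hC0]; simp
      rw [s5] at s4
      rw [s6, s7] at s3
      linarith
    have hTU : T n f y ≤ f y + ε / 2 := by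
      have u1 : b * T n 1 y ≤ b * 1 + b * η := by
        have h := (abs_le.mp herr1).2
        calc b * T n 1 y ≤ b * (1 + η) :=
              mul_le_mul_of_nonneg_left (by linarith) hb0
          _ = b * 1 + b * η := by ring
      have u2 : C * T n sq y ≤ C * sq y + C * η := by
        have h := (abs_le.mp herrsq).2
        calc C * T n sq y ≤ C * (sq y + η) :=
              mul_le_mul_of_nonneg_left (by linarith) hC0
          _ = C * sq y + C * η := by ring
      have u3 : ∑ k, a k * T n (e k) y ≤ ∑ k, a k * e k y + (∑ k, a k) * η := by
        rw [Finset.sum_mul, ← Finset.sum_add_distrib]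
        apply Finset.sum_le_sum
        intro k _
        have h := (abs_le.mp (herr_e k)).2
        calc a k * T n (e k) y ≤ a k * (e k y + η) :=
              mul_le_mul_of_nonneg_left (by linarith) (ha0 k)
          _ = a k * e k y + a k * η := by ring
      have hKb : b + C + ∑ k, a k ≤ K := by
        rw [hbdef, hKdef]
        have : (0:ℝ) < ε := hε
        linarith
      have htot : (b + C + ∑ k, a k) * η ≤ ε / 4 := by
        calc (b + C + ∑ k, a k) * η ≤ K * η :=
              mul_le_mul_of_nonneg_right hKb hη0.le
          _ = ε / 4 := hKη
      have hvy : b * 1 + C * sq y + ∑ k, a k * e k y = f y + ε / 4 := by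
        rw [hbdef]
        linarith [hsum_y]
      have hexp : (b + C + ∑ k, a k) * η = b * η + C * η + (∑ k, a k) * η := by ring
      linarith [upper, u1, u2, u3, htot, hvy, hexp]
    -- LOWER BOUND
    set b' : ℝ := ε / 4 + C * ‖yv‖ ^ 2 with hb'def
    have hb'0 : 0 ≤ b' := by
      have h2 : 0 ≤ C * ‖yv‖ ^ 2 := mul_nonneg hC0 (by positivity)
      rw [hb'def]
      linarith
    clear_value b'
    have hlow : (f y) • (1 : C(X, ℝ)) ≤ f + b' • (1 : C(X, ℝ)) + C • sq + ∑ k, a k • e k := by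
      rw [ContinuousMap.le_def]
      intro x
      have hx := key x y
      rw [← hyvdef] at hx
      have h1 := hsum x
      have h2 : (f + b' • (1 : C(X, ℝ)) + C • sq + ∑ k, a k • e k) x =
          f x + b' + C * sq x + ∑ k, a k * e k x := by
        simp [ContinuousMap.sum_apply]
      have h3 : ((f y) • (1 : C(X, ℝ))) x = f y := by simp
      rw [h2, h3]
      have h4 : f y - f x ≤ |f x - f y| := by
        rw [abs_sub_comm]; exact le_abs_self _
      rw [hb'def]
      linarith
    have lower : f y * T n 1 y ≤ T n f y + b' * T n 1 y + C * T n sq y +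
        ∑ k, a k * T n (e k) y := by
      have s0 : T n ((f y) • (1 : C(X, ℝ))) y = f y * T n 1 y := by
        rw [hhom n (f y) 1 hfy0]; simp
      have s1 := ContinuousMap.le_def.mp (hmono n _ _ hlow) y
      rw [s0] at s1
      have s2 := ContinuousMap.le_def.mp
        (hsub n (f + b' • (1 : C(X, ℝ)) + C • sq) (∑ k, a k • e k)) y
      rw [ContinuousMap.add_apply] at s2
      have s3 := ContinuousMap.le_def.mp
        (hsub n (f + b' • (1 : C(X, ℝ))) (C • sq)) y
      rw [ContinuousMap.add_apply] at s3
      have s3' := ContinuousMap.le_def.mp (hsub n f (b' • (1 : C(X, ℝ)))) y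
      rw [ContinuousMap.add_apply] at s3'
      have s4 := korovkin_aux_sum (T n) (hsub n) (hT0 n) Finset.univ (fun k => a k • e k) y
      have s5 : ∑ k, T n (a k • e k) y = ∑ k, a k * T n (e k) y :=
        Finset.sum_congr rfl fun k _ => by rw [hhom n (a k) (e k) (ha0 k)]; simp
      have s6 : T n (b' • (1 : C(X, ℝ))) y = b' * T n 1 y := by
        rw [hhom n b' 1 hb'0]; simp
      have s7 : T n (C • sq) y = C * T n sq y := by
        rw [hhom n C sq hC0]; simp
      rw [s5] at s4
      rw [s6] at s3'
      rw [s7] at s3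
      linarith
    have hTL : f y - ε / 2 ≤ T n f y := by
      have l1 : f y * 1 - f y * η ≤ f y * T n 1 y := by
        have h := (abs_le.mp herr1).1
        calc f y * 1 - f y * η = f y * (1 - η) := by ring
          _ ≤ f y * T n 1 y := mul_le_mul_of_nonneg_left (by linarith) hfy0
      have l2 : b' * T n 1 y ≤ b' * 1 + b' * η := by
        have h := (abs_le.mp herr1).2
        calc b' * T n 1 y ≤ b' * (1 + η) :=
              mul_le_mul_of_nonneg_left (by linarith) hb'0
          _ = b' * 1 + b' * η := by ring
      have l3 : C * T n sq y ≤ C * sq y + C * η := by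
        have h := (abs_le.mp herrsq).2
        calc C * T n sq y ≤ C * (sq y + η) :=
              mul_le_mul_of_nonneg_left (by linarith) hC0
          _ = C * sq y + C * η := by ring
      have l4 : ∑ k, a k * T n (e k) y ≤ ∑ k, a k * e k y + (∑ k, a k) * η := by
        rw [Finset.sum_mul, ← Finset.sum_add_distrib]
        apply Finset.sum_le_sum
        intro k _
        have h := (abs_le.mp (herr_e k)).2
        calc a k * T n (e k) y ≤ a k * (e k y + η) :=
              mul_le_mul_of_nonneg_left (by linarith) (ha0 k)
          _ = a k * e k y + a k * η := by ring
      have hKb : f y + b' + C + ∑ k, a k ≤ K := by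
        rw [hb'def, hKdef]
        have : (0:ℝ) < ε := hε
        linarith
      have htot : (f y + b' + C + ∑ k, a k) * η ≤ ε / 4 := by
        calc (f y + b' + C + ∑ k, a k) * η ≤ K * η :=
              mul_le_mul_of_nonneg_right hKb hη0.le
          _ = ε / 4 := hKη
      have hvy : b' * 1 + C * sq y + ∑ k, a k * e k y = ε / 4 := by
        rw [hb'def]
        linarith [hsum_y]
      have hexp : (f y + b' + C + ∑ k, a k) * η =
          f y * η + b' * η + C * η + (∑ k, a k) * η := by ring
      linarith [lower, l1, l2, l3, l4, htot, hvy, hexp]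
    rw [Real.dist_eq, abs_lt]
    constructor
    · linarith
    · linarith
  refine ⟨main, ?_⟩
  intro htrans f
  set c : ℝ := ‖f‖ with hcdef
  have hc0 : (0 : ℝ) ≤ c := norm_nonneg f
  clear_value c
  have hfc : (0 : C(X, ℝ)) ≤ f + c • (1 : C(X, ℝ)) := by
    rw [ContinuousMap.le_def]
    intro x
    have := f.norm_coe_le_norm x
    rw [Real.norm_eq_abs] at this
    have := abs_le.mp this
    simp only [ContinuousMap.zero_apply, ContinuousMap.add_apply, ContinuousMap.smul_apply,
      ContinuousMap.one_apply, smul_eq_mul, mul_one]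
    linarith [this.1]
  have H := main _ hfc
  rw [Metric.tendstoUniformly_iff]
  intro ε hε
  have H1 := Metric.tendstoUniformly_iff.mp H (ε / 2) (by positivity)
  have H2 := Metric.tendstoUniformly_iff.mp h1 (ε / (2 * (|c| + 1))) (by positivity)
  filter_upwards [H1, H2] with n hn1 hn2 x
  have hTr := htrans n f c hc0
  have hval : T n (f + c • (1 : C(X, ℝ))) x = T n f x + c * T n 1 x := by
    rw [hTr]; simp
  have d1 := hn1 x
  have d2 := hn2 x
  rw [Real.dist_eq] at d1 d2 ⊢
  have happ : (f + c • (1 : C(X, ℝ))) x = f x + c := by simp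
  rw [happ, hval] at d1
  have hcb : |c * (T n 1 x - 1)| ≤ |c| * (ε / (2 * (|c| + 1))) := by
    rw [abs_mul]
    apply mul_le_mul_of_nonneg_left _ (abs_nonneg c)
    rw [abs_sub_comm]
    exact d2.le
  have hcb2 : |c| * (ε / (2 * (|c| + 1))) < ε / 2 := by
    have h1 : |c| < |c| + 1 := lt_add_one _
    have h2 : (0 : ℝ) < ε / (2 * (|c| + 1)) := by positivity
    calc |c| * (ε / (2 * (|c| + 1))) < (|c| + 1) * (ε / (2 * (|c| + 1))) :=
          mul_lt_mul_of_pos_right h1 h2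
      _ = ε / 2 := by field_simp
  have hid : f x - T n f x = (f x + c - (T n f x + c * T n 1 x)) + c * (T n 1 x - 1) := by
    ring
  calc |f x - T n f x| ≤ |f x + c - (T n f x + c * T n 1 x)| + |c * (T n 1 x - 1)| := by
        rw [hid]; exact abs_add_le _ _
    _ < ε / 2 + ε / 2 := by
        apply add_lt_add_of_lt_of_le d1
        exact hcb.trans hcb2.le
    _ = ε := by ring
end

section
/- (Korovkin theorem for 2π-periodic functions, nonlinear version) Let (T_n) be a sequence of sublinear, monotone and translatable operators from C_{2π}(ℝ) (continuous 2π-periodic functions) into itself such that T_n(g) → g uniformly for each of the five test functions 1, cos, −cos, sin, −sin. Then T_n(f) → f uniformly on ℝ for every f ∈ C_{2π}(ℝ). -/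
open Filter Real

lemma korovkin_key (f : ℝ → ℝ) (hfc : Continuous f) (hfp : Function.Periodic f (2 * π))
    (ε : ℝ) (hε : 0 < ε) :
    ∃ C K : ℝ, 0 ≤ C ∧ C ≤ K ∧ (∀ t, |f t| ≤ C) ∧
      ∀ x t, |f t - f x| ≤ ε + K * (1 - Real.cos (t - x)) := by
  have hπ := Real.pi_pos
  have h2π : (0:ℝ) < 2 * π := by linarith
  obtain ⟨C₀, hC₀⟩ := (isCompact_Icc : IsCompact (Set.Icc (0:ℝ) (2 * π))).exists_bound_of_continuousOn hfc.continuousOn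
  set C := max C₀ 0 with hCdef
  have hC0 : 0 ≤ C := le_max_right _ _
  have hbound : ∀ t, |f t| ≤ C := by
    intro t
    have h1 := toIcoMod_mem_Ico h2π 0 t
    have h2 : f (toIcoMod h2π 0 t) = f t := hfp.sub_zsmul_eq _
    have h3 : toIcoMod h2π 0 t ∈ Set.Icc (0:ℝ) (2 * π) := by
      constructor
      · exact h1.1
      · have := h1.2; simp at this; linarith
    have := hC₀ _ h3
    rw [h2, Real.norm_eq_abs] at this
    exact this.trans (le_max_left _ _)
  have huc := (isCompact_Icc : IsCompact (Set.Icc (-π) (3 * π))).uniformContinuousOn_of_continuous hfc.continuousOn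
  rw [Metric.uniformContinuousOn_iff] at huc
  obtain ⟨δ₀, hδ₀, hδ⟩ := huc ε hε
  set δ := min (δ₀ / 2) π with hδdef
  have hδpos : 0 < δ := lt_min (by linarith) hπ
  have hδπ : δ ≤ π := min_le_right _ _
  have hcosδ : Real.cos δ < 1 := by
    have := Real.cos_lt_cos_of_nonneg_of_le_pi (le_refl 0) hδπ hδpos
    rwa [Real.cos_zero] at this
  have h1c : 0 < 1 - Real.cos δ := by linarith
  refine ⟨C, 2 * C / (1 - Real.cos δ), hC0, ?_, hbound, ?_⟩
  · rw [le_div_iff₀ h1c]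
    nlinarith [Real.neg_one_le_cos δ]
  · intro x t
    have hK0 : 0 ≤ 2 * C / (1 - Real.cos δ) := by positivity
    set d := toIcoMod h2π (-π) (t - x) with hddef
    have hd := toIcoMod_mem_Ico h2π (-π) (t - x)
    have hd1 : -π ≤ d := hd.1
    have hd2 : d < π := by have h2 := hd.2; rw [hddef]; linarith
    have he := self_sub_toIcoMod h2π (-π) (t - x)
    have hft : f t = f (x + d) := by
      have hx : x + d = t - toIcoDiv h2π (-π) (t - x) • (2 * π) := by
        rw [← hddef] at he; linarith [he]
      rw [hx, hfp.sub_zsmul_eq]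
    have hcos_eq : Real.cos (t - x) = Real.cos d := by
      have hx : t - x = d + (toIcoDiv h2π (-π) (t - x) : ℝ) * (2 * π) := by
        rw [← hddef] at he; push_cast [← zsmul_eq_mul]; linarith [he]
      rw [hx, Real.cos_add_int_mul_two_pi]
    have hcle1 := Real.cos_le_one (t - x)
    rcases le_or_gt |d| δ with hcase | hcase
    · -- close case
      set x' := toIcoMod h2π 0 x with hx'def
      have hx' := toIcoMod_mem_Ico h2π 0 x
      have hx'1 : 0 ≤ x' := hx'.1
      have hx'2 : x' < 2 * π := by have := hx'.2; simpa using this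
      have hfx' : f x' = f x := hfp.sub_zsmul_eq _
      have he' := self_sub_toIcoMod h2π 0 x
      have hfx'd : f (x' + d) = f (x + d) := by
        have hx : x' + d = (x + d) - toIcoDiv h2π 0 x • (2 * π) := by
          rw [← hx'def] at he'; linarith [he']
        rw [hx, hfp.sub_zsmul_eq]
      have habsd := abs_le.1 hcase
      have hmem1 : x' + d ∈ Set.Icc (-π) (3 * π) := by
        constructor <;> [linarith; linarith]
      have hmem2 : x' ∈ Set.Icc (-π) (3 * π) := by
        constructor <;> [linarith; linarith]
      have hdist : dist (x' + d) x' < δ₀ := by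
        rw [Real.dist_eq]
        have : |x' + d - x'| = |d| := by ring_nf
        rw [this]
        have : |d| ≤ δ₀ / 2 := hcase.trans (min_le_left _ _)
        linarith
      have := hδ (x' + d) hmem1 x' hmem2 hdist
      rw [Real.dist_eq, hfx', hfx'd, ← hft] at this
      have := (abs_le.1 this.le)
      have hKnn : 0 ≤ 2 * C / (1 - Real.cos δ) * (1 - Real.cos (t - x)) :=
        mul_nonneg hK0 (by linarith)
      rw [abs_le]
      constructor <;> linarith [this.1, this.2]
    · -- far case
      have habs : |d| ≤ π := abs_le.2 ⟨hd1, hd2.le⟩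
      have hcosd : Real.cos d ≤ Real.cos δ := by
        rw [← Real.cos_abs]
        exact Real.cos_le_cos_of_nonneg_of_le_pi hδpos.le habs hcase.le
      have hKeq : 2 * C / (1 - Real.cos δ) * (1 - Real.cos δ) = 2 * C :=
        div_mul_cancel₀ _ (ne_of_gt h1c)
      have hKb : 2 * C ≤ 2 * C / (1 - Real.cos δ) * (1 - Real.cos (t - x)) := by
        rw [hcos_eq]
        have h5 := mul_le_mul_of_nonneg_left (by linarith : 1 - Real.cos δ ≤ 1 - Real.cos d) hK0
        linarith
      have h1 := hbound t
      have h2 := hbound x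
      rw [abs_le] at h1 h2 ⊢
      constructor <;> linarith [h1.1, h1.2, h2.1, h2.2, hKb]

set_option maxHeartbeats 1000000 in
/-- Nonlinear Korovkin theorem for continuous `2π`-periodic functions: if sublinear,
monotone, translatable operators `T_n` on `C_{2π}(ℝ)` satisfy `T_n g → g` uniformly
for the five test functions `1, cos, -cos, sin, -sin`, then `T_n f → f` uniformly
for every `f ∈ C_{2π}(ℝ)`. -/
theorem stmt15
    (P : Set (ℝ → ℝ))
    (hP : P = {f : ℝ → ℝ | Continuous f ∧ Function.Periodic f (2 * π)})
    (T : ℕ → (ℝ → ℝ) → (ℝ → ℝ))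
    (hmaps : ∀ n, ∀ f ∈ P, T n f ∈ P)
    (hsub : ∀ n, ∀ f ∈ P, ∀ g ∈ P, T n (f + g) ≤ T n f + T n g)
    (hhom : ∀ n (a : ℝ), 0 ≤ a → ∀ f ∈ P, T n (a • f) = a • T n f)
    (hmono : ∀ n, ∀ f ∈ P, ∀ g ∈ P, f ≤ g → T n f ≤ T n g)
    (htr : ∀ n, ∀ f ∈ P, ∀ a : ℝ, 0 ≤ a → T n (f + a • 1) = T n f + a • T n 1)
    (h1 : TendstoUniformly (fun n => T n 1) 1 atTop)
    (hcos : TendstoUniformly (fun n => T n Real.cos) Real.cos atTop)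
    (hcos' : TendstoUniformly (fun n => T n (-Real.cos)) (-Real.cos) atTop)
    (hsin : TendstoUniformly (fun n => T n Real.sin) Real.sin atTop)
    (hsin' : TendstoUniformly (fun n => T n (-Real.sin)) (-Real.sin) atTop) :
    ∀ f ∈ P, TendstoUniformly (fun n => T n f) f atTop := by
  subst hP
  -- basic membership facts
  have mem1 : (1 : ℝ → ℝ) ∈ {f : ℝ → ℝ | Continuous f ∧ Function.Periodic f (2 * π)} :=
    ⟨continuous_const, fun x => rfl⟩
  have memcos : Real.cos ∈ {f : ℝ → ℝ | Continuous f ∧ Function.Periodic f (2 * π)} :=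
    ⟨Real.continuous_cos, Real.cos_periodic⟩
  have memsin : Real.sin ∈ {f : ℝ → ℝ | Continuous f ∧ Function.Periodic f (2 * π)} :=
    ⟨Real.continuous_sin, Real.sin_periodic⟩
  have memncos : (-Real.cos) ∈ {f : ℝ → ℝ | Continuous f ∧ Function.Periodic f (2 * π)} :=
    ⟨Real.continuous_cos.neg, fun x => by simp [Real.cos_periodic x]⟩
  have memnsin : (-Real.sin) ∈ {f : ℝ → ℝ | Continuous f ∧ Function.Periodic f (2 * π)} :=
    ⟨Real.continuous_sin.neg, fun x => by simp [Real.sin_periodic x]⟩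
  have memsmul : ∀ (c : ℝ) (g : ℝ → ℝ),
      g ∈ {f : ℝ → ℝ | Continuous f ∧ Function.Periodic f (2 * π)} →
      c • g ∈ {f : ℝ → ℝ | Continuous f ∧ Function.Periodic f (2 * π)} := by
    intro c g hg
    exact ⟨hg.1.const_smul c, fun x => by simp [Pi.smul_apply, hg.2 x]⟩
  have memadd : ∀ (g₁ g₂ : ℝ → ℝ),
      g₁ ∈ {f : ℝ → ℝ | Continuous f ∧ Function.Periodic f (2 * π)} →
      g₂ ∈ {f : ℝ → ℝ | Continuous f ∧ Function.Periodic f (2 * π)} →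
      g₁ + g₂ ∈ {f : ℝ → ℝ | Continuous f ∧ Function.Periodic f (2 * π)} := by
    intro g₁ g₂ hg₁ hg₂
    exact ⟨hg₁.1.add hg₂.1, hg₁.2.add hg₂.2⟩
  -- constants of any sign
  have hconst : ∀ n (c : ℝ), T n (c • (1 : ℝ → ℝ)) = c • T n 1 := by
    intro n c
    rcases le_or_gt 0 c with hc | hc
    · exact hhom n c hc 1 mem1
    · have h0 : T n ((0:ℝ) • (1 : ℝ → ℝ)) = (0:ℝ) • T n 1 := hhom n 0 le_rfl 1 mem1
      have e := htr n (c • (1 : ℝ → ℝ)) (memsmul c 1 mem1) (-c) (by linarith)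
      have e2 : c • (1 : ℝ → ℝ) + (-c) • (1 : ℝ → ℝ) = (0:ℝ) • (1 : ℝ → ℝ) := by
        funext y; simp
      rw [e2, h0] at e
      funext y
      have := congrFun e y
      simp only [Pi.add_apply, Pi.smul_apply, smul_eq_mul, zero_mul] at this ⊢
      linarith
  -- scaled test functions, upper estimate
  have hscale : ∀ n (b : ℝ) (g : ℝ → ℝ),
      g ∈ {f : ℝ → ℝ | Continuous f ∧ Function.Periodic f (2 * π)} →
      (-g) ∈ {f : ℝ → ℝ | Continuous f ∧ Function.Periodic f (2 * π)} →
      ∀ (y η : ℝ), 0 ≤ η → |T n g y - g y| ≤ η → |T n (-g) y + g y| ≤ η →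
      T n (b • g) y ≤ b * g y + |b| * η := by
    intro n b g hg hng y η hη h₁ h₂
    rcases le_or_gt 0 b with hb | hb
    · rw [hhom n b hb g hg]
      simp only [Pi.smul_apply, smul_eq_mul]
      have := (abs_le.1 h₁).2
      have hb' : b * T n g y ≤ b * (g y + η) := by nlinarith
      rw [abs_of_nonneg hb]
      nlinarith
    · have e : b • g = (-b) • (-g) := by funext z; simp
      rw [e, hhom n (-b) (by linarith) (-g) hng]
      simp only [Pi.smul_apply, smul_eq_mul]
      have h₂' : T n (-g) y ≤ -g y + η := by
        have := (abs_le.1 h₂).2; linarith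
      have hb' : (-b) * T n (-g) y ≤ (-b) * (-g y + η) := by nlinarith
      rw [abs_of_neg hb]
      nlinarith
  -- main argument
  intro f hf
  obtain ⟨hfc, hfp⟩ := hf
  have memf : f ∈ {f : ℝ → ℝ | Continuous f ∧ Function.Periodic f (2 * π)} := ⟨hfc, hfp⟩
  rw [Metric.tendstoUniformly_iff]
  intro ε hε
  obtain ⟨C, K, hC0, hCK, hCb, hkey⟩ := korovkin_key f hfc hfp (ε / 3) (by linarith)
  have hK0 : 0 ≤ K := hC0.trans hCK
  set ε₁ := ε / 3 with hε₁def
  have hε₁ : 0 < ε₁ := by rw [hε₁def]; linarith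
  set D := 3 * K + C + ε₁ + 1 with hDdef
  have hD : 0 < D := by rw [hDdef]; linarith
  set η := ε₁ / D with hηdef
  have hηpos : 0 < η := div_pos hε₁ hD
  have hηb : (3 * K + C + ε₁) * η < ε₁ := by
    rw [hηdef, ← mul_div_assoc, div_lt_iff₀ hD]
    nlinarith
  clear_value ε₁ D η
  have E1 := Metric.tendstoUniformly_iff.1 h1 η hηpos
  have Ec := Metric.tendstoUniformly_iff.1 hcos η hηpos
  have Ec' := Metric.tendstoUniformly_iff.1 hcos' η hηpos
  have Es := Metric.tendstoUniformly_iff.1 hsin η hηpos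
  have Es' := Metric.tendstoUniformly_iff.1 hsin' η hηpos
  filter_upwards [E1, Ec, Ec', Es, Es'] with n b1 bc bc' bs bs'
  intro x
  -- clean bounds
  have B1 : ∀ y, |T n 1 y - 1| ≤ η := by
    intro y; have := (b1 y).le
    rw [Real.dist_eq] at this
    rw [abs_sub_comm]; simpa using this
  have Bc : ∀ y, |T n Real.cos y - Real.cos y| ≤ η := by
    intro y; have := (bc y).le
    rw [Real.dist_eq] at this
    rw [abs_sub_comm]; simpa using this
  have Bc' : ∀ y, |T n (-Real.cos) y + Real.cos y| ≤ η := by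
    intro y; have := (bc' y).le
    rw [Real.dist_eq] at this
    rw [show T n (-Real.cos) y + Real.cos y = -((-Real.cos) y - T n (-Real.cos) y) by
      simp, abs_neg]
    exact this
  have Bs : ∀ y, |T n Real.sin y - Real.sin y| ≤ η := by
    intro y; have := (bs y).le
    rw [Real.dist_eq] at this
    rw [abs_sub_comm]; simpa using this
  have Bs' : ∀ y, |T n (-Real.sin) y + Real.sin y| ≤ η := by
    intro y; have := (bs' y).le
    rw [Real.dist_eq] at this
    rw [show T n (-Real.sin) y + Real.sin y = -((-Real.sin) y - T n (-Real.sin) y) by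
      simp, abs_neg]
    exact this
  -- the comparison function
  have hkey' : ∀ t, |f t - f x| ≤
      ε₁ + K * (1 - (Real.cos x * Real.cos t + Real.sin x * Real.sin t)) := by
    intro t
    have h := hkey x t
    have e : Real.cos (t - x) = Real.cos x * Real.cos t + Real.sin x * Real.sin t := by
      rw [Real.cos_sub]; ring
    rw [e] at h
    exact h
  have hfxb := abs_le.1 (hCb x)
  set a := f x + ε₁ + K with hadef
  have ha0 : 0 ≤ a := by rw [hadef]; linarith [hfxb.1]
  have haC : a ≤ C + ε₁ + K := by rw [hadef]; linarith [hfxb.2]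
  clear_value a
  set h := (-(K * Real.cos x)) • Real.cos + (-(K * Real.sin x)) • Real.sin with hhdef
  have memh : h ∈ {f : ℝ → ℝ | Continuous f ∧ Function.Periodic f (2 * π)} :=
    memadd _ _ (memsmul _ _ memcos) (memsmul _ _ memsin)
  -- coefficient bounds
  have habsc : |(-(K * Real.cos x))| ≤ K := by
    rw [abs_neg, abs_mul, abs_of_nonneg hK0]
    nlinarith [Real.abs_cos_le_one x, abs_nonneg (Real.cos x)]
  have habss : |(-(K * Real.sin x))| ≤ K := by
    rw [abs_neg, abs_mul, abs_of_nonneg hK0]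
    nlinarith [Real.abs_sin_le_one x, abs_nonneg (Real.sin x)]
  -- pointwise estimates at x for the pieces
  have u1 : T n ((-(K * Real.cos x)) • Real.cos) x ≤
      (-(K * Real.cos x)) * Real.cos x + K * η := by
    have h5 := hscale n (-(K * Real.cos x)) Real.cos memcos memncos x η hηpos.le (Bc x) (Bc' x)
    have h6 : |(-(K * Real.cos x))| * η ≤ K * η :=
      mul_le_mul_of_nonneg_right habsc hηpos.le
    linarith
  have u2 : T n ((-(K * Real.sin x)) • Real.sin) x ≤
      (-(K * Real.sin x)) * Real.sin x + K * η := by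
    have h5 := hscale n (-(K * Real.sin x)) Real.sin memsin memnsin x η hηpos.le (Bs x) (Bs' x)
    have h6 : |(-(K * Real.sin x))| * η ≤ K * η :=
      mul_le_mul_of_nonneg_right habss hηpos.le
    linarith
  have hB1x := abs_le.1 (B1 x)
  have pyth := Real.sin_sq_add_cos_sq x
  -- UPPER BOUND
  have hub : T n f x - f x ≤ ε₁ + (3 * K + C + ε₁) * η := by
    have hfg : f ≤ h + a • (1 : ℝ → ℝ) := by
      intro t
      have hk := (abs_le.1 (hkey' t)).2
      simp only [hhdef, hadef, Pi.add_apply, Pi.smul_apply, Pi.one_apply, smul_eq_mul]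
      nlinarith [hk]
    have step1 := hmono n f memf (h + a • 1) (memadd _ _ memh (memsmul _ _ mem1)) hfg x
    have step2 := congrFun (htr n h memh a ha0) x
    have step3 := hsub n ((-(K * Real.cos x)) • Real.cos) (memsmul _ _ memcos)
      ((-(K * Real.sin x)) • Real.sin) (memsmul _ _ memsin) x
    rw [← hhdef] at step3
    simp only [Pi.add_apply, Pi.smul_apply, smul_eq_mul] at step1 step2 step3
    have u3 : a * T n 1 x ≤ a * (1 + η) := by nlinarith [hB1x.2]
    have u4 : a * (1 + η) ≤ a + (C + ε₁ + K) * η := by nlinarith [hηpos.le]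
    nlinarith [step1, step2, step3, u1, u2, u3, u4, pyth, hηpos.le]
  -- LOWER BOUND
  have hlb : f x - T n f x ≤ ε₁ + (3 * K + C + ε₁) * η := by
    have hgf : (f x - ε₁) • (1 : ℝ → ℝ) ≤ (f + h) + K • (1 : ℝ → ℝ) := by
      intro t
      have hk := (abs_le.1 (hkey' t)).1
      simp only [hhdef, Pi.add_apply, Pi.smul_apply, Pi.one_apply, smul_eq_mul]
      nlinarith [hk]
    have step1 := hmono n _ (memsmul _ _ mem1) _
      (memadd _ _ (memadd _ _ memf memh) (memsmul _ _ mem1)) hgf x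
    have step2 := congrFun (htr n (f + h) (memadd _ _ memf memh) K hK0) x
    have step3 := hsub n f memf h memh x
    have step3' := hsub n ((-(K * Real.cos x)) • Real.cos) (memsmul _ _ memcos)
      ((-(K * Real.sin x)) • Real.sin) (memsmul _ _ memsin) x
    rw [← hhdef] at step3'
    have step4 := congrFun (hconst n (f x - ε₁)) x
    simp only [Pi.add_apply, Pi.smul_apply, smul_eq_mul] at step1 step2 step3 step3' step4
    -- lower bound for the constant part
    have habsfx : |f x - ε₁| ≤ C + ε₁ := by
      rw [abs_le]; constructor <;> linarith [hfxb.1, hfxb.2]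
    have e1 : |( f x - ε₁) * (T n 1 x - 1)| ≤ (C + ε₁) * η := by
      rw [abs_mul]
      exact mul_le_mul habsfx (B1 x) (abs_nonneg _) (by linarith)
    have e2 := neg_abs_le ((f x - ε₁) * (T n 1 x - 1))
    have l3 : (f x - ε₁) - (C + ε₁) * η ≤ (f x - ε₁) * T n 1 x := by nlinarith [e1, e2]
    have l4 : K * T n 1 x ≤ K * (1 + η) := by nlinarith [hB1x.2]
    nlinarith [step1, step2, step3, step3', step4, u1, u2, l3, l4, pyth, hηpos.le]
  -- conclude
  have : |f x - T n f x| < ε := by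
    rw [abs_lt]
    constructor
    · have : ε₁ + (3 * K + C + ε₁) * η < 2 * ε₁ := by linarith
      rw [hε₁def] at this
      linarith
    · have : ε₁ + (3 * K + C + ε₁) * η < 2 * ε₁ := by linarith
      rw [hε₁def] at this
      linarith
  rw [Real.dist_eq]
  exact this
end

section
/- (Nonlinear Altomare-Korovkin theorem) Let X be a locally compact metric space and E a vector sublattice of real functions on X containing the constants and all functions d_x^p (x ∈ X) for some p ≥ 1. Let (T_n) be sublinear monotone operators from E into functions on X such that T_n(1) → 1 and T_n(d_x^p)(x) → 0, both uniformly on compact subsets of X. Then for every nonnegative f ∈ E ∩ C_b(X), T_n(f) → f uniformly on compact subsets of X; if each T_n is also translatable, the conclusion holds for all f ∈ E ∩ C_b(X). -/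
open Filter

/-! For `x` in a compact set `K`, uniform continuity and boundedness of `f` give
`|f y - f x| ≤ ε + C d(x, y)^p` for all `y`. Monotonicity, subadditivity and positive
homogeneity then squeeze `T_n f (x)` between `(f x - ε)⁺ T_n 1 (x) - C T_n (d_x^p) (x)` and
`(f x + ε) T_n 1 (x) + C T_n (d_x^p) (x)`, both uniformly within `ε` of `f x` on `K` for large `n`.
Positive homogeneity only applies to the nonnegative constants `(f x - ε)⁺` and `f x + ε`, which is
where `f ≥ 0` enters; translatability reduces the general case to the nonnegative `f + M`. -/

lemma IsCompact.exists_forall_dist_lt_abs_sub_lt {X : Type*} [PseudoMetricSpace X] {f : X → ℝ}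
    (hf : Continuous f) {K : Set X} (hK : IsCompact K) {ε : ℝ} (hε : 0 < ε) :
    ∃ δ > 0, ∀ x ∈ K, ∀ y, dist x y < δ → |f y - f x| < ε := by
  obtain ⟨δ, hδ, h⟩ := Metric.mem_uniformity_dist.mp <|
    hK.uniformContinuousAt_of_continuousAt f (fun _ _ => hf.continuousAt)
      (Metric.dist_mem_uniformity hε)
  exact ⟨δ, hδ, fun x hx y hxy => by simpa [Real.dist_eq, abs_sub_comm] using h hxy hx⟩

lemma IsCompact.exists_abs_sub_le_add_mul_dist_rpow {X : Type*} [PseudoMetricSpace X]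
    {f : X → ℝ} (hf : Continuous f) {M : ℝ} (hM0 : 0 ≤ M) (hM : ∀ y, |f y| ≤ M)
    {K : Set X} (hK : IsCompact K) {ε : ℝ} (hε : 0 < ε) {p : ℝ} (hp : 0 ≤ p) :
    ∃ C ≥ 0, ∀ x ∈ K, ∀ y, |f y - f x| ≤ ε + C * dist x y ^ p := by
  obtain ⟨δ, hδ, hfδ⟩ := hK.exists_forall_dist_lt_abs_sub_lt hf hε
  have hδp : 0 < δ ^ p := Real.rpow_pos_of_pos hδ p
  refine ⟨2 * M / δ ^ p, by positivity, fun x hx y => ?_⟩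
  rcases lt_or_ge (dist x y) δ with hxy | hxy
  · have : 0 ≤ 2 * M / δ ^ p * dist x y ^ p := by positivity
    linarith [hfδ x hx y hxy]
  · have hfar : 2 * M ≤ 2 * M / δ ^ p * dist x y ^ p := by
      rw [div_mul_eq_mul_div, le_div_iff₀ hδp]
      gcongr
    linarith [abs_sub (f y) (f x), hM x, hM y]

structure IsSublinearMonotoneOn {X : Type*} (E : Set (X → ℝ)) (T : (X → ℝ) → X → ℝ) : Prop where
  map_add_le : ∀ f ∈ E, ∀ g ∈ E, T (f + g) ≤ T f + T g
  map_smul_of_nonneg : ∀ a : ℝ, 0 ≤ a → ∀ f ∈ E, T (a • f) = a • T f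
  mono : ∀ f ∈ E, ∀ g ∈ E, f ≤ g → T f ≤ T g

namespace IsSublinearMonotoneOn

variable {X : Type*} {E : Set (X → ℝ)} {T : (X → ℝ) → X → ℝ}

lemma map_const (hT : IsSublinearMonotoneOn E T) (h1 : (1 : X → ℝ) ∈ E) {c : ℝ} (hc : 0 ≤ c) :
    T (fun _ => c) = c • T 1 := by
  have hc1 : (fun _ : X => c) = c • (1 : X → ℝ) := by ext; simp
  rw [hc1, hT.map_smul_of_nonneg c hc 1 h1]

lemma le_add_of_le_add (hT : IsSublinearMonotoneOn E T) {f g h : X → ℝ} (hf : f ∈ E)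
    (hg : g ∈ E) (hh : h ∈ E) (hgh : g + h ∈ E) (hle : f ≤ g + h) : T f ≤ T g + T h :=
  (hT.mono f hf _ hgh hle).trans (hT.map_add_le g hg h hh)

theorem abs_apply_sub_le (hT : IsSublinearMonotoneOn E T)
    (hEadd : ∀ f ∈ E, ∀ g ∈ E, f + g ∈ E) (hEsmul : ∀ (c : ℝ), ∀ f ∈ E, c • f ∈ E)
    (hEconst : ∀ c : ℝ, (fun _ : X => c) ∈ E)
    {f g : X → ℝ} (hf : f ∈ E) (hg : g ∈ E) (hf0 : 0 ≤ f) (hg0 : 0 ≤ g)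
    {x : X} {ε C M η : ℝ} (hε : 0 ≤ ε) (hC : 0 ≤ C) (hfxM : f x ≤ M)
    (hfg : ∀ y, |f y - f x| ≤ ε + C * g y)
    (hT1 : |T 1 x - 1| ≤ η) (hTg : |T g x| ≤ η) :
    |T f x - f x| ≤ ε + η * (M + ε + C) := by
  have hCg : C • g ∈ E := hEsmul C g hg
  have hE1 : (1 : X → ℝ) ∈ E := hEconst 1
  obtain ⟨hT1lo, hT1hi⟩ := abs_le.mp hT1
  obtain ⟨-, hTghi⟩ := abs_le.mp hTg
  have hη : 0 ≤ η := (abs_nonneg _).trans hT1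
  have hfx : 0 ≤ f x := hf0 x
  have hupper : T f x ≤ (f x + ε) * T 1 x + C * T g x := by
    have hle : f ≤ (fun _ => f x + ε) + C • g := fun y => by
      simp only [Pi.add_apply, Pi.smul_apply, smul_eq_mul]
      linarith [(abs_le.mp (hfg y)).2]
    have := hT.le_add_of_le_add hf (hEconst _) hCg (hEadd _ (hEconst _) _ hCg) hle x
    simpa only [Pi.add_apply, hT.map_const hE1 (by positivity : 0 ≤ f x + ε),
      hT.map_smul_of_nonneg C hC g hg, Pi.smul_apply, smul_eq_mul] using this
  obtain ⟨c, hc⟩ : ∃ c, c = max (f x - ε) 0 := ⟨_, rfl⟩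
  have hc0 : 0 ≤ c := hc ▸ le_max_right _ _
  have hlower : c * T 1 x ≤ T f x + C * T g x := by
    have hle : (fun _ => c) ≤ f + C • g := fun y => by
      simp only [Pi.add_apply, Pi.smul_apply, smul_eq_mul]
      have := mul_nonneg hC (hg0 y)
      rw [hc]
      exact max_le (by linarith [(abs_le.mp (hfg y)).1]) (by linarith [show 0 ≤ f y from hf0 y])
    have := hT.le_add_of_le_add (hEconst c) hf hCg (hEadd _ hf _ hCg) hle x
    simpa only [Pi.add_apply, hT.map_const hE1 hc0,
      hT.map_smul_of_nonneg C hC g hg, Pi.smul_apply, smul_eq_mul] using this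
  have hCTg : C * T g x ≤ C * η := mul_le_mul_of_nonneg_left hTghi hC
  rw [abs_le]
  constructor
  · have : c * (1 - η) ≤ c * T 1 x := mul_le_mul_of_nonneg_left (by linarith) hc0
    have : c * η ≤ M * η := mul_le_mul_of_nonneg_right (hc ▸ max_le (by linarith) (hfx.trans hfxM)) hη
    have : f x - ε ≤ c := hc ▸ le_max_left _ _
    nlinarith
  · have : (f x + ε) * T 1 x ≤ (f x + ε) * (1 + η) :=
      mul_le_mul_of_nonneg_left (by linarith) (by positivity)
    have : f x * η ≤ M * η := mul_le_mul_of_nonneg_right hfxM hη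
    nlinarith

end IsSublinearMonotoneOn

theorem tendstoUniformlyOn_of_isSublinearMonotoneOn {X : Type*} [PseudoMetricSpace X]
    {E : Set (X → ℝ)} (hEadd : ∀ f ∈ E, ∀ g ∈ E, f + g ∈ E)
    (hEsmul : ∀ (c : ℝ), ∀ f ∈ E, c • f ∈ E) (hEconst : ∀ c : ℝ, (fun _ : X => c) ∈ E)
    {p : ℝ} (hp : 0 ≤ p) (hEd : ∀ x : X, (fun y => dist x y ^ p) ∈ E)
    {T : ℕ → (X → ℝ) → X → ℝ} (hT : ∀ n, IsSublinearMonotoneOn E (T n))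
    {K : Set X} (hK : IsCompact K) (h1 : TendstoUniformlyOn (fun n => T n 1) 1 atTop K)
    (h2 : ∀ ε > 0, ∃ N : ℕ, ∀ n ≥ N, ∀ x ∈ K, |T n (fun y => dist x y ^ p) x| < ε)
    {f : X → ℝ} (hfE : f ∈ E) (hfc : Continuous f) (hfb : ∃ M, ∀ x, |f x| ≤ M) (hf0 : 0 ≤ f) :
    TendstoUniformlyOn (fun n => T n f) f atTop K := by
  obtain ⟨M₀, hM₀⟩ := hfb
  set M := max M₀ 0
  have hM : ∀ x, |f x| ≤ M := fun x => (hM₀ x).trans (le_max_left _ _)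
  rw [Metric.tendstoUniformlyOn_iff]
  intro ε hε
  obtain ⟨C, hC, hfd⟩ :=
    hK.exists_abs_sub_le_add_mul_dist_rpow hfc (le_max_right _ _) hM (half_pos hε) hp
  obtain ⟨η, hη, hηA⟩ : ∃ η > 0, η * (M + ε / 2 + C) < ε / 2 := by
    have hA : 0 ≤ M + ε / 2 + C := by positivity
    refine ⟨ε / 2 / (M + ε / 2 + C + 1), by positivity, ?_⟩
    rw [div_mul_eq_mul_div, div_lt_iff₀ (by positivity)]
    nlinarith
  obtain ⟨N, hN⟩ := h2 η hη
  filter_upwards [Metric.tendstoUniformlyOn_iff.mp h1 η hη, eventually_ge_atTop N]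
    with n hn1 hnN x hx
  have hT1 : |T n 1 x - 1| ≤ η := by
    simpa [Real.dist_eq, abs_sub_comm] using (hn1 x hx).le
  have := (hT n).abs_apply_sub_le hEadd hEsmul hEconst hfE (hEd x) hf0 (fun y => by positivity)
    (half_pos hε).le hC ((le_abs_self _).trans (hM x)) (hfd x hx) hT1 (hN n hnN x hx).le
  rw [Real.dist_eq, abs_sub_comm]
  linarith

lemma TendstoUniformlyOn.of_map_add_const_smul_one {ι X : Type*} {l : Filter ι} {K : Set X}
    {T : ι → (X → ℝ) → X → ℝ} {f : X → ℝ} {a : ℝ}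
    (htrans : ∀ i, T i (f + a • 1) = T i f + a • T i 1)
    (hf : TendstoUniformlyOn (fun i => T i (f + a • 1)) (f + a • 1) l K)
    (h1 : TendstoUniformlyOn (fun i => T i 1) 1 l K) :
    TendstoUniformlyOn (fun i => T i f) f l K := by
  convert hf.sub ((uniformContinuous_const_smul a).comp_tendstoUniformlyOn h1) using 1
  · ext i x
    simp [htrans]
  · ext x
    simp

theorem stmt17_general {X : Type*} [MetricSpace X]
    (E : Set (X → ℝ))
    (hEadd : ∀ f ∈ E, ∀ g ∈ E, f + g ∈ E)
    (hEsmul : ∀ (c : ℝ), ∀ f ∈ E, c • f ∈ E)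
    (hEconst : ∀ c : ℝ, (fun _ : X => c) ∈ E)
    (p : ℝ) (hp : 1 ≤ p)
    (hEd : ∀ x : X, (fun y : X => dist x y ^ p) ∈ E)
    (T : ℕ → (X → ℝ) → (X → ℝ))
    (hsub : ∀ n, ∀ f ∈ E, ∀ g ∈ E, T n (f + g) ≤ T n f + T n g)
    (hhom : ∀ n (a : ℝ), 0 ≤ a → ∀ f ∈ E, T n (a • f) = a • T n f)
    (hmono : ∀ n, ∀ f ∈ E, ∀ g ∈ E, f ≤ g → T n f ≤ T n g)
    (h1 : ∀ K : Set X, IsCompact K →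
      TendstoUniformlyOn (fun n => T n 1) 1 atTop K)
    (h2 : ∀ K : Set X, IsCompact K → ∀ ε > (0 : ℝ), ∃ N : ℕ, ∀ n ≥ N, ∀ x ∈ K,
      |T n (fun y : X => dist x y ^ p) x| < ε) :
    (∀ f ∈ E, Continuous f → (∃ M : ℝ, ∀ x, |f x| ≤ M) → 0 ≤ f →
      ∀ K : Set X, IsCompact K → TendstoUniformlyOn (fun n => T n f) f atTop K) ∧
    ((∀ n, ∀ f ∈ E, ∀ a : ℝ, 0 ≤ a → T n (f + a • 1) = T n f + a • T n 1) →
      ∀ f ∈ E, Continuous f → (∃ M : ℝ, ∀ x, |f x| ≤ M) →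
        ∀ K : Set X, IsCompact K → TendstoUniformlyOn (fun n => T n f) f atTop K) := by
  have hT : ∀ n, IsSublinearMonotoneOn E (T n) := fun n => ⟨hsub n, hhom n, hmono n⟩
  have nonneg : ∀ f ∈ E, Continuous f → (∃ M : ℝ, ∀ x, |f x| ≤ M) → 0 ≤ f →
      ∀ K : Set X, IsCompact K → TendstoUniformlyOn (fun n => T n f) f atTop K :=
    fun f hfE hfc hfb hf0 K hK => tendstoUniformlyOn_of_isSublinearMonotoneOn hEadd hEsmul
      hEconst (zero_le_one.trans hp) hEd hT hK (h1 K hK) (h2 K hK) hfE hfc hfb hf0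
  refine ⟨nonneg, fun htrans f hfE hfc ⟨M₀, hM₀⟩ K hK => ?_⟩
  set M := max M₀ 0
  have hM : ∀ x, |f x| ≤ M := fun x => (hM₀ x).trans (le_max_left _ _)
  have hconst : M • (1 : X → ℝ) = fun _ => M := by ext; simp
  refine TendstoUniformlyOn.of_map_add_const_smul_one (fun n => htrans n f hfE M
    (le_max_right _ _)) (nonneg _ ?_ ?_ ⟨2 * M, fun x => ?_⟩ (fun x => ?_) K hK) (h1 K hK)
  · exact hconst ▸ hEadd f hfE _ (hEconst M)
  · exact hconst ▸ hfc.add continuous_const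
  · simp only [hconst, Pi.add_apply]
    have := abs_le.mp (hM x)
    exact abs_le.mpr ⟨by linarith, by linarith⟩
  · simp only [hconst, Pi.add_apply, Pi.zero_apply]
    linarith [neg_abs_le (f x), hM x]

/-- Nonlinear Altomare–Korovkin theorem on a locally compact metric space: if `E` is a
vector sublattice of functions on `X` containing the constants and the functions
`d_x^p`, and the sublinear monotone operators `T_n : E → F(X)` satisfy `T_n 1 → 1`
and `T_n (d_x^p)(x) → 0` uniformly on compact subsets, then `T_n f → f` uniformly on
compact subsets for every nonnegative `f ∈ E ∩ C_b(X)`; when the `T_n` are moreover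
translatable, for every `f ∈ E ∩ C_b(X)`. -/
theorem stmt17 {X : Type*} [MetricSpace X] [LocallyCompactSpace X]
    (E : Set (X → ℝ))
    (hEadd : ∀ f ∈ E, ∀ g ∈ E, f + g ∈ E)
    (hEsmul : ∀ (c : ℝ), ∀ f ∈ E, c • f ∈ E)
    (hEabs : ∀ f ∈ E, |f| ∈ E)
    (hEconst : ∀ c : ℝ, (fun _ : X => c) ∈ E)
    (p : ℝ) (hp : 1 ≤ p)
    (hEd : ∀ x : X, (fun y : X => dist x y ^ p) ∈ E)
    (T : ℕ → (X → ℝ) → (X → ℝ))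
    (hsub : ∀ n, ∀ f ∈ E, ∀ g ∈ E, T n (f + g) ≤ T n f + T n g)
    (hhom : ∀ n (a : ℝ), 0 ≤ a → ∀ f ∈ E, T n (a • f) = a • T n f)
    (hmono : ∀ n, ∀ f ∈ E, ∀ g ∈ E, f ≤ g → T n f ≤ T n g)
    (h1 : ∀ K : Set X, IsCompact K →
      TendstoUniformlyOn (fun n => T n 1) 1 atTop K)
    (h2 : ∀ K : Set X, IsCompact K → ∀ ε > (0 : ℝ), ∃ N : ℕ, ∀ n ≥ N, ∀ x ∈ K,
      |T n (fun y : X => dist x y ^ p) x| < ε) :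
    (∀ f ∈ E, Continuous f → (∃ M : ℝ, ∀ x, |f x| ≤ M) → 0 ≤ f →
      ∀ K : Set X, IsCompact K → TendstoUniformlyOn (fun n => T n f) f atTop K) ∧
    ((∀ n, ∀ f ∈ E, ∀ a : ℝ, 0 ≤ a → T n (f + a • 1) = T n f + a • T n 1) →
      ∀ f ∈ E, Continuous f → (∃ M : ℝ, ∀ x, |f x| ≤ M) →
        ∀ K : Set X, IsCompact K → TendstoUniformlyOn (fun n => T n f) f atTop K) :=
  stmt17_general E hEadd hEsmul hEconst p hp hEd T hsub hhom hmono h1 h2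
end

section
/- The bivariate max-product Bernstein operators T_n on the triangle Δ = {(x₁,x₂) : 0 ≤ x₁, x₂, x₁+x₂ ≤ 1}, defined by T_n(f)(x₁,x₂) = [max over 0≤i≤n, 0≤j≤n−i of C(n,i)C(n−i,j)x₁^i x₂^j (1−x₁−x₂)^{n−i−j} f(i/n, j/n)] divided by [the same maximum with f replaced by 1], are sublinear, monotone and unital operators from C(Δ) to itself. -/
/-- The triangle `Δ = {(x₁,x₂) : 0 ≤ x₁, 0 ≤ x₂, x₁ + x₂ ≤ 1}`. -/
def Tri : Set (ℝ × ℝ) := {p | 0 ≤ p.1 ∧ 0 ≤ p.2 ∧ p.1 + p.2 ≤ 1}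

/-- The basis term `C(n,i) C(n-i,j) x₁^i x₂^j (1 - x₁ - x₂)^{n-i-j}`. -/
noncomputable def bern (n i j : ℕ) (p : ℝ × ℝ) : ℝ :=
  (n.choose i : ℝ) * ((n - i).choose j : ℝ) * p.1 ^ i * p.2 ^ j *
    (1 - p.1 - p.2) ^ (n - i - j)

/-- The node `(i/n, j/n)` as a point of the triangle `Δ`. -/
noncomputable def node (n i j : ℕ) (hi : i ≤ n) (hij : i + j ≤ n) : Tri :=
  ⟨((i : ℝ) / n, (j : ℝ) / n), by
    rcases Nat.eq_zero_or_pos n with hn | hn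
    · subst hn
      have hi0 : i = 0 := Nat.le_zero.mp hi
      have hj0 : j = 0 := by omega
      subst hi0; subst hj0
      simp [Tri]
    · have hn' : (0 : ℝ) < n := by exact_mod_cast hn
      refine ⟨by positivity, by positivity, ?_⟩
      rw [← add_div, div_le_one hn']
      exact_mod_cast hij⟩

/-- The max-product numerator: the maximum over `0 ≤ i ≤ n`, `0 ≤ j ≤ n - i` of
`bern n i j x · f(i/n, j/n)`. -/
noncomputable def maxProdNum (n : ℕ) (f : C(Tri, ℝ)) (x : Tri) : ℝ :=
  ⨆ i : Fin (n + 1), ⨆ j : Fin (n + 1 - i.1),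
    bern n i.1 j.1 x * f (node n i.1 j.1 (Nat.lt_succ_iff.mp i.isLt)
      (by have := i.isLt; have := j.isLt; omega))

lemma bern_nonneg (n i j : ℕ) {p : ℝ × ℝ} (hp : p ∈ Tri) : 0 ≤ bern n i j p := by
  obtain ⟨h₁, h₂, h₃⟩ := hp
  have : 0 ≤ 1 - p.1 - p.2 := by linarith
  unfold bern
  positivity

lemma bern_self_zero (n : ℕ) (p : ℝ × ℝ) : bern n n 0 p = p.1 ^ n := by
  simp [bern]

lemma bern_zero_self (n : ℕ) (p : ℝ × ℝ) : bern n 0 n p = p.2 ^ n := by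
  simp [bern]

lemma bern_zero_zero (n : ℕ) (p : ℝ × ℝ) : bern n 0 0 p = (1 - p.1 - p.2) ^ n := by
  simp [bern]

section maxProdNum

variable {n : ℕ} {f g : C(Tri, ℝ)} {x : Tri}

lemma le_maxProdNum (f : C(Tri, ℝ)) (x : Tri) {i j : ℕ} (hi : i ≤ n) (hij : i + j ≤ n) :
    bern n i j x * f (node n i j hi hij) ≤ maxProdNum n f x :=
  le_ciSup_of_le (Finite.bddAbove_range _) ⟨i, by omega⟩ <|
    le_ciSup (f := fun j : Fin (n + 1 - i) => bern n i j x * f (node n i j hi (by omega)))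
      (Finite.bddAbove_range _) ⟨j, by omega⟩

lemma maxProdNum_le {c : ℝ}
    (h : ∀ i j (hi : i ≤ n) (hij : i + j ≤ n), bern n i j x * f (node n i j hi hij) ≤ c) :
    maxProdNum n f x ≤ c :=
  ciSup_le fun i =>
    have : Nonempty (Fin (n + 1 - i)) := ⟨⟨0, by omega⟩⟩
    ciSup_le fun j => h i j _ _

lemma maxProdNum_mono (hfg : f ≤ g) : maxProdNum n f x ≤ maxProdNum n g x :=
  maxProdNum_le fun i j hi hij =>
    (mul_le_mul_of_nonneg_left (hfg _) (bern_nonneg n i j x.2)).trans (le_maxProdNum g x hi hij)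

lemma maxProdNum_add_le : maxProdNum n (f + g) x ≤ maxProdNum n f x + maxProdNum n g x :=
  maxProdNum_le fun i j hi hij => by
    rw [ContinuousMap.add_apply, mul_add]
    exact add_le_add (le_maxProdNum f x hi hij) (le_maxProdNum g x hi hij)

lemma maxProdNum_smul {a : ℝ} (ha : 0 ≤ a) : maxProdNum n (a • f) x = a * maxProdNum n f x := by
  simp only [maxProdNum, Real.mul_iSup_of_nonneg ha, ContinuousMap.smul_apply, smul_eq_mul,
    mul_left_comm a]

/-- Some barycentric coordinate of `x` is positive, and its `n`-th power is a corner term. -/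
lemma maxProdNum_one_pos (n : ℕ) (x : Tri) : 0 < maxProdNum n 1 x := by
  have hcorner : 0 < x.1.1 ∨ 0 < x.1.2 ∨ 0 < 1 - x.1.1 - x.1.2 := by
    by_contra! h
    linarith [h.1, h.2.1, h.2.2]
  rcases hcorner with hc | hc | hc
  · refine lt_of_lt_of_le ?_ (le_maxProdNum 1 x le_rfl (by omega : n + 0 ≤ n))
    rw [ContinuousMap.one_apply, mul_one, bern_self_zero]
    positivity
  · refine lt_of_lt_of_le ?_ (le_maxProdNum 1 x (Nat.zero_le n) (by omega : 0 + n ≤ n))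
    rw [ContinuousMap.one_apply, mul_one, bern_zero_self]
    positivity
  · refine lt_of_lt_of_le ?_ (le_maxProdNum 1 x (Nat.zero_le n) (by omega : 0 + 0 ≤ n))
    rw [ContinuousMap.one_apply, mul_one, bern_zero_zero]
    positivity

end maxProdNum

/-- The bivariate max-product Bernstein operators on the triangle `Δ` are sublinear,
monotone and unital. -/
theorem stmt18 (T : ℕ → C(Tri, ℝ) → C(Tri, ℝ))
    (hT : ∀ (n : ℕ) (f : C(Tri, ℝ)) (x : Tri),
      T n f x = maxProdNum n f x / maxProdNum n 1 x) :
    (∀ n (f g : C(Tri, ℝ)), T n (f + g) ≤ T n f + T n g) ∧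
    (∀ n (a : ℝ) (f : C(Tri, ℝ)), 0 ≤ a → T n (a • f) = a • T n f) ∧
    (∀ n (f g : C(Tri, ℝ)), f ≤ g → T n f ≤ T n g) ∧
    (∀ n, T n 1 = 1) := by
  refine ⟨fun n f g => ContinuousMap.le_def.2 fun x => ?_, fun n a f ha => ?_,
    fun n f g hfg => ContinuousMap.le_def.2 fun x => ?_, fun n => ?_⟩
  · rw [ContinuousMap.add_apply, hT, hT, hT, ← add_div]
    exact div_le_div_of_nonneg_right maxProdNum_add_le (maxProdNum_one_pos n x).le
  · ext x
    rw [ContinuousMap.smul_apply, hT, hT, maxProdNum_smul ha, smul_eq_mul, mul_div_assoc]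
  · rw [hT, hT]
    exact div_le_div_of_nonneg_right (maxProdNum_mono hfg) (maxProdNum_one_pos n x).le
  · ext x
    rw [hT, div_self (maxProdNum_one_pos n x).ne', ContinuousMap.one_apply]
end

section
/- The modified Bernstein operators T_n(f)(x) = Σ_{k=0}^n C(n,k) x^k (1−x)^{n−k} · max{f(k/n), 0} on C([0,1]) are sublinear and monotone, satisfy T_n(g) → g uniformly on [0,1] for g ∈ {1, x, x²}, and T_n(f) → f uniformly on [0,1] for every nonnegative f ∈ C([0,1]); but T_n(f) does not converge to f for f strictly negative (e.g., f = −1, since T_n(−1) = 0). -/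
open Filter

/-- The node `k/n` as a point of `[0,1]`. -/
noncomputable def unitNode (n k : ℕ) (hk : k ≤ n) : Set.Icc (0 : ℝ) 1 :=
  ⟨(k : ℝ) / n, by
    rcases Nat.eq_zero_or_pos n with hn | hn
    · subst hn
      have hk0 : k = 0 := Nat.le_zero.mp hk
      subst hk0; simp
    · have hn' : (0 : ℝ) < n := by exact_mod_cast hn
      exact ⟨by positivity, by rw [div_le_one hn']; exact_mod_cast hk⟩⟩

lemma Tkey (T : ℕ → C(Set.Icc (0 : ℝ) 1, ℝ) → C(Set.Icc (0 : ℝ) 1, ℝ))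
    (hT : ∀ (n : ℕ) (f : C(Set.Icc (0 : ℝ) 1, ℝ)) (x : Set.Icc (0 : ℝ) 1),
      T n f x = ∑ k : Fin (n + 1),
        (n.choose k.1 : ℝ) * (x : ℝ) ^ k.1 * (1 - (x : ℝ)) ^ (n - k.1) *
          max (f (unitNode n k.1 (Nat.lt_succ_iff.mp k.isLt))) 0)
    (n : ℕ) (f : C(Set.Icc (0 : ℝ) 1, ℝ)) (x : Set.Icc (0 : ℝ) 1) :
    T n f x = bernsteinApproximation n (f ⊔ 0) x := by
  rw [hT, bernsteinApproximation.apply]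
  refine Finset.sum_congr rfl fun k _ => ?_
  have hz : bernstein.z k = unitNode n k.1 (Nat.lt_succ_iff.mp k.isLt) := rfl
  rw [hz, bernstein_apply, ContinuousMap.sup_apply, ContinuousMap.zero_apply]
  ring

/-- The modified Bernstein operators
`T_n(f)(x) = Σ_k C(n,k) x^k (1-x)^{n-k} max{f(k/n), 0}` are sublinear and monotone;
`T_n g → g` uniformly for `g ∈ {1, x, x²}`, and `T_n f → f` uniformly for every
nonnegative `f ∈ C([0,1])`; but `T_n (-1) = 0`, so `T_n f` does not converge to `f`
for `f = -1`. -/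
theorem stmt19 (T : ℕ → C(Set.Icc (0 : ℝ) 1, ℝ) → C(Set.Icc (0 : ℝ) 1, ℝ))
    (hT : ∀ (n : ℕ) (f : C(Set.Icc (0 : ℝ) 1, ℝ)) (x : Set.Icc (0 : ℝ) 1),
      T n f x = ∑ k : Fin (n + 1),
        (n.choose k.1 : ℝ) * (x : ℝ) ^ k.1 * (1 - (x : ℝ)) ^ (n - k.1) *
          max (f (unitNode n k.1 (Nat.lt_succ_iff.mp k.isLt))) 0)
    (X1 X2 : C(Set.Icc (0 : ℝ) 1, ℝ))
    (hX1 : ∀ x : Set.Icc (0 : ℝ) 1, X1 x = (x : ℝ))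
    (hX2 : ∀ x : Set.Icc (0 : ℝ) 1, X2 x = (x : ℝ) ^ 2) :
    (∀ n (f g : C(Set.Icc (0 : ℝ) 1, ℝ)), T n (f + g) ≤ T n f + T n g) ∧
    (∀ n (a : ℝ) (f : C(Set.Icc (0 : ℝ) 1, ℝ)), 0 ≤ a → T n (a • f) = a • T n f) ∧
    (∀ n (f g : C(Set.Icc (0 : ℝ) 1, ℝ)), f ≤ g → T n f ≤ T n g) ∧
    (∀ g ∈ ({1, X1, X2} : Set C(Set.Icc (0 : ℝ) 1, ℝ)),
      TendstoUniformly (fun n x => T n g x) (fun x => g x) atTop) ∧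
    (∀ f : C(Set.Icc (0 : ℝ) 1, ℝ), 0 ≤ f →
      TendstoUniformly (fun n x => T n f x) (fun x => f x) atTop) ∧
    (∀ n, T n (-1) = 0) ∧
    ¬ TendstoUniformly (fun n x => T n (-1 : C(Set.Icc (0 : ℝ) 1, ℝ)) x)
        (fun _ => (-1 : ℝ)) atTop := by
  have key : ∀ n f x, T n f x = bernsteinApproximation n (f ⊔ 0) x := Tkey T hT
  have coefnn : ∀ (n k : ℕ) (x : Set.Icc (0:ℝ) 1),
      0 ≤ (n.choose k : ℝ) * (x : ℝ) ^ k * (1 - (x : ℝ)) ^ (n - k) := by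
    intro n k x
    have h0 : (0:ℝ) ≤ x := x.2.1
    have h1 : (x:ℝ) ≤ 1 := x.2.2
    have : (0:ℝ) ≤ 1 - x := by linarith
    positivity
  have Teq : ∀ (f : C(Set.Icc (0:ℝ) 1, ℝ)), 0 ≤ f →
      (fun n (x : Set.Icc (0:ℝ) 1) => T n f x)
        = fun n x => bernsteinApproximation n f x := by
    intro f hf
    funext n x
    rw [key, sup_eq_left.mpr hf]
  have nonnegCase : ∀ f : C(Set.Icc (0 : ℝ) 1, ℝ), 0 ≤ f →
      TendstoUniformly (fun n x => T n f x) (fun x => f x) atTop := by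
    intro f hf
    rw [Teq f hf]
    exact ContinuousMap.tendsto_iff_tendstoUniformly.mp (bernsteinApproximation_uniform f)
  refine ⟨?_, ?_, ?_, ?_, nonnegCase, ?_, ?_⟩
  · intro n f g
    rw [ContinuousMap.le_def]
    intro x
    simp only [ContinuousMap.add_apply, hT]
    rw [← Finset.sum_add_distrib]
    refine Finset.sum_le_sum fun k _ => ?_
    rw [← mul_add]
    refine mul_le_mul_of_nonneg_left ?_ (coefnn n k.1 x)
    exact sup_le (add_le_add le_sup_left le_sup_left)
      (add_nonneg le_sup_right le_sup_right)
  · intro n a f ha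
    ext x
    simp only [ContinuousMap.smul_apply, hT, smul_eq_mul, Finset.mul_sum]
    refine Finset.sum_congr rfl fun k _ => ?_
    have h1 := mul_max_of_nonneg (f (unitNode n k.1 (Nat.lt_succ_iff.mp k.isLt))) 0 ha
    rw [mul_zero] at h1
    rw [← h1]
    ring
  · intro n f g hfg
    rw [ContinuousMap.le_def]
    intro x
    simp only [hT]
    refine Finset.sum_le_sum fun k _ => ?_
    refine mul_le_mul_of_nonneg_left ?_ (coefnn n k.1 x)
    exact max_le_max (hfg _) le_rfl
  · intro g hg
    refine nonnegCase g ?_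
    rw [ContinuousMap.le_def]
    rcases hg with h | h | h
    · subst h; intro x; simp
    · subst h; intro x; rw [ContinuousMap.zero_apply, hX1]; exact x.2.1
    · subst h
      intro x
      rw [ContinuousMap.zero_apply, hX2]
      positivity
  · intro n
    ext x
    rw [hT]
    simp
  · intro h
    have hx : Tendsto (fun n => T n (-1 : C(Set.Icc (0:ℝ) 1, ℝ)) ⟨0, by norm_num⟩)
        atTop (nhds (-1 : ℝ)) := h.tendsto_at _
    have hzero : ∀ n, T n (-1 : C(Set.Icc (0:ℝ) 1, ℝ)) ⟨0, by norm_num⟩ = 0 := by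
      intro n
      rw [hT]
      simp
    rw [funext hzero] at hx
    have := tendsto_nhds_unique hx tendsto_const_nhds
    norm_num at this
end
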